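/- arXiv:2511.03951 — 5 statements merged into one kernel-verified Lean document; each statement's English description precedes it below -/
import Mathlib

section
/- For every complex number ρ with Re ρ > 0, every real number c with −Re ρ < c < 0, and all positive real numbers x and y, the function τ ↦ Γ(−(c+iτ)) · Γ(ρ + c + iτ) · x^{c+iτ} · y^{ρ−c−iτ} is integrable (in the Bochner/Lebesgue sense) on ℝ. -/
open MeasureTheory Set Filter FourierTransform
open scoped Real

namespace MellinBarnesAux

noncomputable def phi (ρ : ℂ) (c : ℝ) (u : ℝ) : ℂ :=
  -(c : ℂ) * u - ρ * (Real.log (1 + Real.exp u) : ℝ)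

noncomputable def h (ρ : ℂ) (c : ℝ) (u : ℝ) : ℂ := Complex.exp (phi ρ c u)

noncomputable def psi (ρ : ℂ) (c : ℝ) (u : ℝ) : ℂ :=
  -(c : ℂ) - ρ * ((Real.exp u / (1 + Real.exp u) : ℝ) : ℂ)

noncomputable def psi' (ρ : ℂ) (u : ℝ) : ℂ :=
  -(ρ * ((Real.exp u / (1 + Real.exp u) ^ 2 : ℝ) : ℂ))

lemma onePlusExp_pos (u : ℝ) : (0 : ℝ) < 1 + Real.exp u := by positivity

lemma hasDerivAt_phi (ρ : ℂ) (c : ℝ) (u : ℝ) :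
    HasDerivAt (phi ρ c) (psi ρ c u) u := by
  have h1 : HasDerivAt (fun v : ℝ => -(c : ℂ) * (v : ℂ)) (-(c : ℂ)) u := by
    simpa using ((hasDerivAt_id u).ofReal_comp.const_mul (-(c : ℂ)))
  have hL : HasDerivAt (fun v : ℝ => Real.log (1 + Real.exp v))
      (Real.exp u / (1 + Real.exp u)) u := by
    simpa using ((Real.hasDerivAt_exp u).const_add 1).log (onePlusExp_pos u).ne'
  have h2 : HasDerivAt (fun v : ℝ => ρ * ((Real.log (1 + Real.exp v) : ℝ) : ℂ))
      (ρ * ((Real.exp u / (1 + Real.exp u) : ℝ) : ℂ)) u :=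
    (hL.ofReal_comp.const_mul ρ)
  exact h1.sub h2

lemma hasDerivAt_psi (ρ : ℂ) (c : ℝ) (u : ℝ) :
    HasDerivAt (psi ρ c) (psi' ρ u) u := by
  have hq : HasDerivAt (fun v : ℝ => Real.exp v / (1 + Real.exp v))
      (Real.exp u / (1 + Real.exp u) ^ 2) u := by
    have := (Real.hasDerivAt_exp u).div ((Real.hasDerivAt_exp u).const_add 1)
      (onePlusExp_pos u).ne'
    exact this.congr_deriv (by ring)
  exact (hq.ofReal_comp.const_mul ρ).const_sub (-(c : ℂ))

lemma hasDerivAt_h (ρ : ℂ) (c : ℝ) (u : ℝ) :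
    HasDerivAt (h ρ c) (h ρ c u * psi ρ c u) u := by
  exact (hasDerivAt_phi ρ c u).cexp

noncomputable def h2fun (ρ : ℂ) (c : ℝ) (u : ℝ) : ℂ :=
  h ρ c u * psi ρ c u * psi ρ c u + h ρ c u * psi' ρ u

lemma hasDerivAt_h1 (ρ : ℂ) (c : ℝ) (u : ℝ) :
    HasDerivAt (fun v => h ρ c v * psi ρ c v) (h2fun ρ c u) u := by
  exact (hasDerivAt_h ρ c u).mul (hasDerivAt_psi ρ c u)

lemma contDiff_h (ρ : ℂ) (c : ℝ) : ContDiff ℝ 2 (h ρ c) := by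
  apply ContDiff.cexp
  apply ContDiff.sub
  · exact contDiff_const.mul (Complex.ofRealCLM.contDiff.comp contDiff_id)
  · refine contDiff_const.mul (Complex.ofRealCLM.contDiff.comp ?_)
    exact (contDiff_const.add Real.contDiff_exp).log (fun u => (onePlusExp_pos u).ne')

lemma norm_h (ρ : ℂ) (c : ℝ) (u : ℝ) :
    ‖h ρ c u‖ = Real.exp (-c * u - ρ.re * Real.log (1 + Real.exp u)) := by
  rw [h, Complex.norm_exp]
  congr 1
  simp [phi]

lemma norm_psi_le (ρ : ℂ) (c : ℝ) (u : ℝ) : ‖psi ρ c u‖ ≤ |c| + ‖ρ‖ := by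
  have hq0 : (0 : ℝ) ≤ Real.exp u / (1 + Real.exp u) := by positivity
  have hq1 : Real.exp u / (1 + Real.exp u) ≤ 1 := by
    rw [div_le_one (onePlusExp_pos u)]; linarith [Real.exp_pos u]
  calc ‖psi ρ c u‖ ≤ ‖-(c:ℂ)‖ + ‖ρ * ((Real.exp u / (1 + Real.exp u) : ℝ) : ℂ)‖ :=
        norm_sub_le _ _
    _ ≤ |c| + ‖ρ‖ := by
        rw [norm_neg, Complex.norm_real, Real.norm_eq_abs]
        gcongr
        rw [norm_mul, Complex.norm_real, Real.norm_eq_abs, abs_of_nonneg hq0]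
        nlinarith [norm_nonneg ρ]

lemma norm_psi'_le (ρ : ℂ) (u : ℝ) : ‖psi' ρ u‖ ≤ ‖ρ‖ := by
  have hq0 : (0 : ℝ) ≤ Real.exp u / (1 + Real.exp u) ^ 2 := by positivity
  have hq1 : Real.exp u / (1 + Real.exp u) ^ 2 ≤ 1 := by
    rw [div_le_one (by positivity)]
    nlinarith [Real.exp_pos u]
  rw [psi', norm_neg, norm_mul, Complex.norm_real, Real.norm_eq_abs, abs_of_nonneg hq0]
  nlinarith [norm_nonneg ρ]


section Majorant

lemma integrable_exp_neg_abs {b : ℝ} (hb : 0 < b) :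
    Integrable (fun u : ℝ => Real.exp (-b * |u|)) := by
  have hcont : Continuous fun u : ℝ => Real.exp (-b * |u|) := by fun_prop
  have hplus : Integrable ((Ici (0:ℝ)).indicator fun u : ℝ => Real.exp (-b * |u|)) := by
    refine IntegrableOn.integrable_indicator ?_ measurableSet_Ici
    rw [integrableOn_Ici_iff_integrableOn_Ioi]
    refine (exp_neg_integrableOn_Ioi 0 hb).congr_fun (fun u hu => ?_) measurableSet_Ioi
    rw [abs_of_pos hu]
  have hminus : Integrable fun u : ℝ =>
      ((Ici (0:ℝ)).indicator fun v : ℝ => Real.exp (-b * |v|)) (-u) := hplus.comp_neg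
  refine (hplus.add hminus).mono' hcont.aestronglyMeasurable (ae_of_all _ fun u => ?_)
  rw [Real.norm_eq_abs, abs_of_pos (Real.exp_pos _)]
  rcases le_or_gt 0 u with hu | hu
  · have h1 : ((Ici (0:ℝ)).indicator fun v : ℝ => Real.exp (-b * |v|)) u
        = Real.exp (-b * |u|) := indicator_of_mem hu _
    have h2 : (0:ℝ) ≤ ((Ici (0:ℝ)).indicator fun v : ℝ => Real.exp (-b * |v|)) (-u) :=
      indicator_nonneg (fun v _ => (Real.exp_pos _).le) _
    simp only [Pi.add_apply]; linarith
  · have h1 : ((Ici (0:ℝ)).indicator fun v : ℝ => Real.exp (-b * |v|)) (-u)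
        = Real.exp (-b * |u|) := by
      rw [indicator_of_mem (by simpa using hu.le) _, abs_neg]
    have h2 : (0:ℝ) ≤ ((Ici (0:ℝ)).indicator fun v : ℝ => Real.exp (-b * |v|)) u :=
      indicator_nonneg (fun v _ => (Real.exp_pos _).le) _
    simp only [Pi.add_apply]; linarith

end Majorant

section Integrability

variable {ρ : ℂ} {c : ℝ}

lemma norm_h_le (hρ : 0 < ρ.re) (hc₁ : -ρ.re < c) (hc₂ : c < 0) (u : ℝ) :
    ‖h ρ c u‖ ≤ Real.exp (-(min (-c) (c + ρ.re)) * |u|) := by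
  rw [norm_h]
  apply Real.exp_le_exp.2
  have hL0 : 0 ≤ Real.log (1 + Real.exp u) :=
    Real.log_nonneg (by linarith [Real.exp_pos u])
  rcases le_or_gt 0 u with hu | hu
  · have hLu : u ≤ Real.log (1 + Real.exp u) := by
      calc u = Real.log (Real.exp u) := (Real.log_exp u).symm
        _ ≤ Real.log (1 + Real.exp u) :=
          Real.log_le_log (Real.exp_pos u) (by linarith)
    rw [abs_of_nonneg hu]
    nlinarith [min_le_right (-c) (c + ρ.re), hρ.le,
      mul_le_mul_of_nonneg_left hLu hρ.le]
  · rw [abs_of_neg hu]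
    nlinarith [min_le_left (-c) (c + ρ.re), hρ.le]

lemma continuous_psi : Continuous (psi ρ c) := by
  refine continuous_const.sub (continuous_const.mul (Complex.continuous_ofReal.comp ?_))
  exact Real.continuous_exp.div (continuous_const.add Real.continuous_exp)
    (fun u => (onePlusExp_pos u).ne')

lemma continuous_psi' : Continuous (psi' ρ) := by
  refine Continuous.neg (continuous_const.mul (Complex.continuous_ofReal.comp ?_))
  exact Real.continuous_exp.div ((continuous_const.add Real.continuous_exp).pow 2)
    (fun u => by positivity)

lemma b_pos (hρ : 0 < ρ.re) (hc₁ : -ρ.re < c) (hc₂ : c < 0) :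
    0 < min (-c) (c + ρ.re) := lt_min (by linarith) (by linarith)

lemma integrable_h (hρ : 0 < ρ.re) (hc₁ : -ρ.re < c) (hc₂ : c < 0) :
    Integrable (h ρ c) := by
  refine (integrable_exp_neg_abs (b_pos hρ hc₁ hc₂)).mono'
    (contDiff_h ρ c).continuous.aestronglyMeasurable (ae_of_all _ fun u => ?_)
  exact norm_h_le hρ hc₁ hc₂ u

lemma integrable_h1 (hρ : 0 < ρ.re) (hc₁ : -ρ.re < c) (hc₂ : c < 0) :
    Integrable (fun u => h ρ c u * psi ρ c u) := by
  refine (((integrable_exp_neg_abs (b_pos hρ hc₁ hc₂)).const_mul (|c| + ‖ρ‖)).mono'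
    ((contDiff_h ρ c).continuous.mul continuous_psi).aestronglyMeasurable
    (ae_of_all _ fun u => ?_))
  rw [norm_mul]
  calc ‖h ρ c u‖ * ‖psi ρ c u‖
      ≤ Real.exp (-(min (-c) (c + ρ.re)) * |u|) * (|c| + ‖ρ‖) := by
        apply mul_le_mul (norm_h_le hρ hc₁ hc₂ u) (norm_psi_le ρ c u)
          (norm_nonneg _) (Real.exp_pos _).le
    _ = (|c| + ‖ρ‖) * Real.exp (-(min (-c) (c + ρ.re)) * |u|) := mul_comm _ _

lemma integrable_h2 (hρ : 0 < ρ.re) (hc₁ : -ρ.re < c) (hc₂ : c < 0) :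
    Integrable (h2fun ρ c) := by
  refine (((integrable_exp_neg_abs (b_pos hρ hc₁ hc₂)).const_mul
      ((|c| + ‖ρ‖) ^ 2 + ‖ρ‖)).mono' ?_ (ae_of_all _ fun u => ?_))
  · exact (((contDiff_h ρ c).continuous.mul continuous_psi).mul continuous_psi |>.add
      ((contDiff_h ρ c).continuous.mul continuous_psi')).aestronglyMeasurable
  · have hh := norm_h_le hρ hc₁ hc₂ u
    have hp := norm_psi_le ρ c u
    have hp' := norm_psi'_le ρ u
    have hE : (0:ℝ) < Real.exp (-(min (-c) (c + ρ.re)) * |u|) := Real.exp_pos _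
    have hn0 : (0:ℝ) ≤ ‖h ρ c u‖ := norm_nonneg _
    have hn1 : (0:ℝ) ≤ ‖psi ρ c u‖ := norm_nonneg _
    have hn2 : (0:ℝ) ≤ ‖psi' ρ u‖ := norm_nonneg _
    calc ‖h2fun ρ c u‖
        ≤ ‖h ρ c u * psi ρ c u * psi ρ c u‖ + ‖h ρ c u * psi' ρ u‖ := norm_add_le _ _
      _ = ‖h ρ c u‖ * ‖psi ρ c u‖ * ‖psi ρ c u‖ + ‖h ρ c u‖ * ‖psi' ρ u‖ := by
          rw [norm_mul, norm_mul, norm_mul]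
      _ ≤ ((|c| + ‖ρ‖) ^ 2 + ‖ρ‖) * Real.exp (-(min (-c) (c + ρ.re)) * |u|) := by
          have t1 : ‖h ρ c u‖ * (‖psi ρ c u‖ * ‖psi ρ c u‖)
              ≤ Real.exp (-(min (-c) (c + ρ.re)) * |u|) * ((|c| + ‖ρ‖) * (|c| + ‖ρ‖)) :=
            mul_le_mul hh (mul_le_mul hp hp hn1 (by positivity)) (by positivity) hE.le
          have t2 : ‖h ρ c u‖ * ‖psi' ρ u‖
              ≤ Real.exp (-(min (-c) (c + ρ.re)) * |u|) * ‖ρ‖ :=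
            mul_le_mul hh hp' hn2 hE.le
          nlinarith [t1, t2]

lemma deriv_h (u : ℝ) : deriv (h ρ c) u = h ρ c u * psi ρ c u :=
  (hasDerivAt_h ρ c u).deriv

lemma iteratedDeriv_h_one : iteratedDeriv 1 (h ρ c) = fun u => h ρ c u * psi ρ c u := by
  rw [iteratedDeriv_one]
  exact funext deriv_h

lemma iteratedDeriv_h_two : iteratedDeriv 2 (h ρ c) = h2fun ρ c := by
  rw [iteratedDeriv_succ, iteratedDeriv_h_one]
  exact funext fun u => (hasDerivAt_h1 ρ c u).deriv

end Integrability

section Fourier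

variable {ρ : ℂ} {c : ℝ}

lemma norm_fourier_h_le (w : ℝ) : ‖𝓕 (h ρ c) w‖ ≤ ∫ u, ‖h ρ c u‖ :=
  VectorFourier.norm_fourierIntegral_le_integral_norm _ _ _ _ _

lemma fourier_iteratedDeriv_two (hρ : 0 < ρ.re) (hc₁ : -ρ.re < c) (hc₂ : c < 0) :
    𝓕 (iteratedDeriv 2 (h ρ c)) =
      fun w : ℝ => (2 * Real.pi * Complex.I * w) ^ 2 • 𝓕 (h ρ c) w := by
  refine Real.fourier_iteratedDeriv (N := 2) (contDiff_h ρ c) (fun n hn => ?_) le_rfl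
  have hn' : n ≤ 2 := by exact_mod_cast hn
  interval_cases n
  · simpa [iteratedDeriv_zero] using integrable_h hρ hc₁ hc₂
  · rw [iteratedDeriv_h_one]; exact integrable_h1 hρ hc₁ hc₂
  · rw [iteratedDeriv_h_two]; exact integrable_h2 hρ hc₁ hc₂

lemma fourier_decay (hρ : 0 < ρ.re) (hc₁ : -ρ.re < c) (hc₂ : c < 0) (τ : ℝ) :
    (1 + τ ^ 2) * ‖𝓕 (h ρ c) (τ / (2 * Real.pi))‖ ≤
      (∫ u, ‖h ρ c u‖) + ∫ u, ‖h2fun ρ c u‖ := by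
  have hπ : (2 * Real.pi) ≠ 0 := by positivity
  have key : τ ^ 2 * ‖𝓕 (h ρ c) (τ / (2 * Real.pi))‖ ≤ ∫ u, ‖h2fun ρ c u‖ := by
    have h1 : ‖𝓕 (iteratedDeriv 2 (h ρ c)) (τ / (2 * Real.pi))‖
        ≤ ∫ u, ‖iteratedDeriv 2 (h ρ c) u‖ :=
      VectorFourier.norm_fourierIntegral_le_integral_norm _ _ _ _ _
    rw [fourier_iteratedDeriv_two hρ hc₁ hc₂, iteratedDeriv_h_two] at h1
    simp only at h1
    have h2 : (2 * (Real.pi:ℂ) * Complex.I * (↑(τ / (2 * Real.pi)) : ℂ)) ^ 2 = -(τ:ℂ)^2 := by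
      have hπc : ((Real.pi:ℂ)) ≠ 0 :=
        Complex.ofReal_ne_zero.mpr Real.pi_ne_zero
      have hw : (2 * (Real.pi:ℂ) * Complex.I * (↑(τ / (2 * Real.pi)) : ℂ))
          = Complex.I * (τ:ℂ) := by
        push_cast
        field_simp
      rw [hw, mul_pow, Complex.I_sq]
      ring
    rw [h2] at h1
    calc τ ^ 2 * ‖𝓕 (h ρ c) (τ / (2 * Real.pi))‖
        = ‖(-(τ:ℂ)^2) • 𝓕 (h ρ c) (τ / (2 * Real.pi))‖ := by
          rw [norm_smul]
          congr 1
          simp [norm_neg]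
      _ ≤ ∫ u, ‖h2fun ρ c u‖ := h1
  have h0 : ‖𝓕 (h ρ c) (τ / (2 * Real.pi))‖ ≤ ∫ u, ‖h ρ c u‖ := norm_fourier_h_le _
  nlinarith [norm_nonneg (𝓕 (h ρ c) (τ / (2 * Real.pi)))]

end Fourier

section Identity

noncomputable def sigma' (u : ℝ) : ℝ := Real.exp u / (1 + Real.exp u)

lemma sigma_pos (u : ℝ) : 0 < sigma' u := div_pos (Real.exp_pos u) (onePlusExp_pos u)

lemma sigma_lt_one (u : ℝ) : sigma' u < 1 := by
  rw [sigma', div_lt_one (onePlusExp_pos u)]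
  linarith [Real.exp_pos u]

lemma hasDerivAt_sigma (u : ℝ) :
    HasDerivAt sigma' (Real.exp u / (1 + Real.exp u) ^ 2) u := by
  have := (Real.hasDerivAt_exp u).div ((Real.hasDerivAt_exp u).const_add 1)
    (onePlusExp_pos u).ne'
  exact this.congr_deriv (by ring)

lemma sigma_strictMono : StrictMono sigma' := by
  intro a b hab
  rw [sigma', sigma', div_lt_div_iff₀ (onePlusExp_pos a) (onePlusExp_pos b)]
  have := Real.exp_lt_exp.2 hab
  nlinarith [Real.exp_pos a, Real.exp_pos b]

lemma range_sigma : Set.range sigma' = Set.Ioo (0:ℝ) 1 := by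
  ext t
  constructor
  · rintro ⟨u, rfl⟩
    exact ⟨sigma_pos u, sigma_lt_one u⟩
  · rintro ⟨ht0, ht1⟩
    refine ⟨Real.log (t / (1 - t)), ?_⟩
    have h1t : 0 < 1 - t := by linarith
    have hpos : 0 < t / (1 - t) := div_pos ht0 h1t
    rw [sigma', Real.exp_log hpos]
    field_simp
    ring

lemma one_sub_sigma (u : ℝ) : 1 - sigma' u = (1 + Real.exp u)⁻¹ := by
  rw [sigma']
  field_simp
  ring

lemma log_sigma (u : ℝ) : Real.log (sigma' u) = u - Real.log (1 + Real.exp u) := by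
  rw [sigma', Real.log_div (Real.exp_ne_zero u) (onePlusExp_pos u).ne', Real.log_exp]

lemma sigma_deriv_eq_exp (u : ℝ) :
    Real.exp u / (1 + Real.exp u) ^ 2
      = Real.exp (u - 2 * Real.log (1 + Real.exp u)) := by
  rw [Real.exp_sub, two_mul, Real.exp_add, Real.exp_log (onePlusExp_pos u), sq]

variable {ρ : ℂ} {c : ℝ}

/-- pointwise identity for the substituted integrand -/
lemma integrand_eq (hρ : 0 < ρ.re) (τ u : ℝ) :
    |Real.exp u / (1 + Real.exp u) ^ 2| •
        ((↑(sigma' u) : ℂ) ^ (-((c:ℂ) + τ * Complex.I) - 1) *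
          (1 - (↑(sigma' u) : ℂ)) ^ (ρ + ((c:ℂ) + τ * Complex.I) - 1))
      = Complex.exp (↑(-2 * Real.pi * u * (τ / (2 * Real.pi))) * Complex.I) • h ρ c u := by
  have hπ : Real.pi ≠ 0 := Real.pi_ne_zero
  have hB : (0:ℝ) < 1 + Real.exp u := onePlusExp_pos u
  set L : ℝ := Real.log (1 + Real.exp u) with hL
  have e1 : (↑(sigma' u) : ℂ) ^ (-((c:ℂ) + τ * Complex.I) - 1)
      = Complex.exp ((↑(u - L) : ℂ) * (-((c:ℂ) + τ * Complex.I) - 1)) := by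
    rw [Complex.cpow_def_of_ne_zero (Complex.ofReal_ne_zero.mpr (sigma_pos u).ne')]
    congr 2
    rw [← Complex.ofReal_log (sigma_pos u).le, log_sigma]
  have e2 : (1 - (↑(sigma' u) : ℂ)) ^ (ρ + ((c:ℂ) + τ * Complex.I) - 1)
      = Complex.exp ((↑(-L) : ℂ) * (ρ + ((c:ℂ) + τ * Complex.I) - 1)) := by
    have h1s : (1 : ℂ) - (↑(sigma' u) : ℂ) = ((1 + Real.exp u)⁻¹ : ℝ) := by
      rw [← one_sub_sigma]; push_cast; ring
    rw [h1s, Complex.cpow_def_of_ne_zero (Complex.ofReal_ne_zero.mpr (by positivity))]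
    congr 2
    rw [← Complex.ofReal_log (by positivity), Real.log_inv, hL]
  have e3 : ((Real.exp u / (1 + Real.exp u) ^ 2 : ℝ) : ℂ)
      = Complex.exp ((u : ℂ) - 2 * (L:ℂ)) := by
    rw [sigma_deriv_eq_exp, Complex.ofReal_exp]
    push_cast
    ring_nf
    rfl
  rw [abs_of_pos (by positivity : (0:ℝ) < Real.exp u / (1 + Real.exp u) ^ 2)]
  rw [Complex.real_smul, smul_eq_mul, e1, e2, e3, h, phi]
  rw [← Complex.exp_add, ← Complex.exp_add, ← Complex.exp_add]
  congr 1
  have harg : (-2 * Real.pi * u * (τ / (2 * Real.pi))) = -(u * τ) := by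
    field_simp
  rw [harg, ← hL]
  push_cast
  ring

lemma beta_eq_fourier (hρ : 0 < ρ.re) (hc₁ : -ρ.re < c) (hc₂ : c < 0) (τ : ℝ) :
    Complex.betaIntegral (-((c:ℂ) + τ * Complex.I)) (ρ + ((c:ℂ) + τ * Complex.I))
      = 𝓕 (h ρ c) (τ / (2 * Real.pi)) := by
  rw [Complex.betaIntegral, intervalIntegral.integral_of_le zero_le_one,
    MeasureTheory.integral_Ioc_eq_integral_Ioo]
  have himg : Set.Ioo (0:ℝ) 1 = sigma' '' Set.univ := by
    rw [Set.image_univ, range_sigma]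
  rw [himg, integral_image_eq_integral_abs_deriv_smul MeasurableSet.univ
    (fun x _ => (hasDerivAt_sigma x).hasDerivWithinAt)
    (sigma_strictMono.injective.injOn) _]
  rw [MeasureTheory.setIntegral_univ, Real.fourier_real_eq_integral_exp_smul]
  exact MeasureTheory.integral_congr_ae (ae_of_all _ fun u => integrand_eq hρ τ u)

end Identity

lemma continuous_Gamma_comp {g : ℝ → ℂ} (hg : Continuous g) (hpos : ∀ t, 0 < (g t).re) :
    Continuous fun t => Complex.Gamma (g t) := by
  rw [continuous_iff_continuousAt]
  intro t
  refine (Complex.differentiableAt_Gamma _ fun m => ?_).continuousAt.comp hg.continuousAt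
  intro hEq
  have := hpos t
  rw [hEq] at this
  simp only [Complex.neg_re, Complex.natCast_re] at this
  have := Nat.cast_nonneg (α := ℝ) m
  linarith

end MellinBarnesAux

open MellinBarnesAux in
theorem mellin_barnes_integrand_integrable'
    (ρ : ℂ) (hρ : 0 < ρ.re) (c : ℝ) (hc₁ : -ρ.re < c) (hc₂ : c < 0)
    (x y : ℝ) (hx : 0 < x) (hy : 0 < y) :
    Integrable (fun τ : ℝ =>
      Complex.Gamma (-((c : ℂ) + (τ : ℂ) * Complex.I)) *
        Complex.Gamma (ρ + (c : ℂ) + (τ : ℂ) * Complex.I) *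
        (x : ℂ) ^ ((c : ℂ) + (τ : ℂ) * Complex.I) *
        (y : ℂ) ^ (ρ - (c : ℂ) - (τ : ℂ) * Complex.I)) := by
  have hGamma : ∀ τ : ℝ,
      Complex.Gamma (-((c : ℂ) + τ * Complex.I)) *
        Complex.Gamma (ρ + (c : ℂ) + τ * Complex.I)
      = Complex.Gamma ρ * 𝓕 (h ρ c) (τ / (2 * Real.pi)) := by
    intro τ
    have hre1 : 0 < (-((c:ℂ) + τ * Complex.I)).re := by
      simp only [Complex.neg_re, Complex.add_re, Complex.ofReal_re, Complex.mul_re,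
        Complex.I_re, Complex.ofReal_im, Complex.I_im]
      ring_nf
      linarith
    have hre2 : 0 < (ρ + ((c:ℂ) + τ * Complex.I)).re := by
      simp only [Complex.add_re, Complex.ofReal_re, Complex.mul_re,
        Complex.I_re, Complex.ofReal_im, Complex.I_im]
      ring_nf
      linarith
    have key := Complex.Gamma_mul_Gamma_eq_betaIntegral hre1 hre2
    have hsum : -((c:ℂ) + τ * Complex.I) + (ρ + ((c:ℂ) + τ * Complex.I)) = ρ := by ring
    rw [hsum] at key
    rw [show ρ + (c : ℂ) + τ * Complex.I = ρ + ((c:ℂ) + τ * Complex.I) by ring, key,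
      beta_eq_fourier hρ hc₁ hc₂ τ]
  have hcont : Continuous (fun τ : ℝ =>
      Complex.Gamma (-((c : ℂ) + (τ : ℂ) * Complex.I)) *
        Complex.Gamma (ρ + (c : ℂ) + (τ : ℂ) * Complex.I) *
        (x : ℂ) ^ ((c : ℂ) + (τ : ℂ) * Complex.I) *
        (y : ℂ) ^ (ρ - (c : ℂ) - (τ : ℂ) * Complex.I)) := by
    have hbase : Continuous fun τ : ℝ => (c : ℂ) + (τ : ℂ) * Complex.I := by
      exact continuous_const.add (Complex.continuous_ofReal.mul continuous_const)
    have hg1 : Continuous fun τ : ℝ => Complex.Gamma (-((c : ℂ) + (τ : ℂ) * Complex.I)) := by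
      refine continuous_Gamma_comp hbase.neg fun t => ?_
      simp only [Complex.neg_re, Complex.add_re, Complex.ofReal_re, Complex.mul_re,
        Complex.I_re, Complex.ofReal_im, Complex.I_im]
      ring_nf
      linarith
    have hg2 : Continuous fun τ : ℝ =>
        Complex.Gamma (ρ + (c : ℂ) + (τ : ℂ) * Complex.I) := by
      refine continuous_Gamma_comp ((continuous_const.add continuous_const).add
        (Complex.continuous_ofReal.mul continuous_const)) fun t => ?_
      simp only [Complex.add_re, Complex.ofReal_re, Complex.mul_re,
        Complex.I_re, Complex.ofReal_im, Complex.I_im]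
      ring_nf
      linarith
    have hg3 : Continuous fun τ : ℝ => (x : ℂ) ^ ((c : ℂ) + (τ : ℂ) * Complex.I) :=
      Continuous.const_cpow hbase (Or.inl (Complex.ofReal_ne_zero.mpr hx.ne'))
    have hg4 : Continuous fun τ : ℝ => (y : ℂ) ^ (ρ - (c : ℂ) - (τ : ℂ) * Complex.I) := by
      refine Continuous.const_cpow ?_ (Or.inl (Complex.ofReal_ne_zero.mpr hy.ne'))
      exact (continuous_const.sub continuous_const).sub
        (Complex.continuous_ofReal.mul continuous_const)
    exact ((hg1.mul hg2).mul hg3).mul hg4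
  set M0 : ℝ := ∫ u, ‖h ρ c u‖ with hM0
  set M2 : ℝ := ∫ u, ‖h2fun ρ c u‖ with hM2
  set D : ℝ := ‖Complex.Gamma ρ‖ * (x ^ c * y ^ (ρ.re - c)) * (M0 + M2) with hD
  refine (integrable_inv_one_add_sq.const_mul D).mono'
    hcont.aestronglyMeasurable (ae_of_all _ fun τ => ?_)
  have hM0nn : 0 ≤ M0 := integral_nonneg fun u => norm_nonneg _
  have hM2nn : 0 ≤ M2 := integral_nonneg fun u => norm_nonneg _
  have hv : ‖𝓕 (h ρ c) (τ / (2 * Real.pi))‖ ≤ (M0 + M2) * (1 + τ ^ 2)⁻¹ := by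
    rw [← div_eq_mul_inv, le_div_iff₀ (by positivity)]
    calc ‖𝓕 (h ρ c) (τ / (2 * Real.pi))‖ * (1 + τ ^ 2)
        = (1 + τ ^ 2) * ‖𝓕 (h ρ c) (τ / (2 * Real.pi))‖ := mul_comm _ _
      _ ≤ M0 + M2 := fourier_decay hρ hc₁ hc₂ τ
  have hxnorm : ‖(x : ℂ) ^ ((c : ℂ) + (τ : ℂ) * Complex.I)‖ = x ^ c := by
    rw [Complex.norm_cpow_eq_rpow_re_of_pos hx]
    congr 1
    simp [Complex.add_re, Complex.ofReal_re, Complex.mul_re, Complex.I_re,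
      Complex.ofReal_im, Complex.I_im]
  have hynorm : ‖(y : ℂ) ^ (ρ - (c : ℂ) - (τ : ℂ) * Complex.I)‖ = y ^ (ρ.re - c) := by
    rw [Complex.norm_cpow_eq_rpow_re_of_pos hy]
    congr 1
    simp [Complex.sub_re, Complex.add_re, Complex.ofReal_re, Complex.mul_re, Complex.I_re,
      Complex.ofReal_im, Complex.I_im]
  calc ‖Complex.Gamma (-((c : ℂ) + (τ : ℂ) * Complex.I)) *
        Complex.Gamma (ρ + (c : ℂ) + (τ : ℂ) * Complex.I) *
        (x : ℂ) ^ ((c : ℂ) + (τ : ℂ) * Complex.I) *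
        (y : ℂ) ^ (ρ - (c : ℂ) - (τ : ℂ) * Complex.I)‖
      = ‖Complex.Gamma ρ * 𝓕 (h ρ c) (τ / (2 * Real.pi))‖ * (x ^ c) * (y ^ (ρ.re - c)) := by
        rw [norm_mul, norm_mul, hGamma τ, hxnorm, hynorm]
    _ = (‖Complex.Gamma ρ‖ * (x ^ c * y ^ (ρ.re - c))) *
          ‖𝓕 (h ρ c) (τ / (2 * Real.pi))‖ := by
        rw [norm_mul]; ring
    _ ≤ (‖Complex.Gamma ρ‖ * (x ^ c * y ^ (ρ.re - c))) * ((M0 + M2) * (1 + τ ^ 2)⁻¹) := by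
        apply mul_le_mul_of_nonneg_left hv
        have : (0:ℝ) ≤ x ^ c := Real.rpow_nonneg hx.le c
        have : (0:ℝ) ≤ y ^ (ρ.re - c) := Real.rpow_nonneg hy.le _
        positivity
    _ = D * (1 + τ ^ 2)⁻¹ := by rw [hD]; ring


/-- **Integrability of the Mellin–Barnes integrand.**
For a complex exponent `ρ` with `0 < Re ρ`, a real contour abscissa `c` with
`-Re ρ < c < 0`, and positive reals `x, y`, the function
`τ ↦ Γ(-(c+iτ)) Γ(ρ+c+iτ) x^{c+iτ} y^{ρ-c-iτ}` is Bochner integrable on `ℝ`. -/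
theorem mellin_barnes_integrand_integrable
    (ρ : ℂ) (hρ : 0 < ρ.re) (c : ℝ) (hc₁ : -ρ.re < c) (hc₂ : c < 0)
    (x y : ℝ) (hx : 0 < x) (hy : 0 < y) :
    Integrable (fun τ : ℝ =>
      Complex.Gamma (-((c : ℂ) + (τ : ℂ) * Complex.I)) *
        Complex.Gamma (ρ + (c : ℂ) + (τ : ℂ) * Complex.I) *
        (x : ℂ) ^ ((c : ℂ) + (τ : ℂ) * Complex.I) *
        (y : ℂ) ^ (ρ - (c : ℂ) - (τ : ℂ) * Complex.I)) :=
  mellin_barnes_integrand_integrable' ρ hρ c hc₁ hc₂ x y hx hy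
end

section
/- For every real t, the two-dimensional Behrens–Fisher integral collapses to a one-dimensional Euler–Beta integral: f_T(t) = [(ν₁/g)^{a} · (ν₂/h)^{b} · Γ(c) / (√(2π(g+h)) · 2^{a+b} · Γ(a) · Γ(b))] · ∫₀¹ u^{a−1} (1−u)^{b−1} · (α(t) + u·ν₁/(2g) + (1−u)·ν₂/(2h))^{−c} du. -/
/-!
Rescaling `w₁ = (ν₁/g) x`, `w₂ = (ν₂/h) y` turns `f_T(t)` into a constant times
`∫∫ x^(a-1) y^(b-1) (x+y)^(1/2) e^(-Ax-By)` with `A = α + ν₁/(2g)`, `B = α + ν₂/(2h)`.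
Substituting `y = x v` in the inner integral and swapping the integrals, the `x`-integral is a
Gamma integral equal to `Γ(c) (1+v)^(1/2) v^(b-1) (A + B v)^(-c)`, and `v = 1/u - 1` turns the
remaining `v`-integral into the Euler–Beta integral. The same substitution justifies Fubini: it
carries the `v`-integrand to a Beta integrand times the factor `(A u + B (1-u))^(-c)`, which is
bounded on `(0, 1)`.
-/

open MeasureTheory

/-- The Behrens–Fisher null density, as the absolutely convergent double integral. -/
noncomputable def behrensFisherPDF (ν₁ ν₂ : ℕ) (g h : ℝ) (t : ℝ) : ℝ :=
  ∫ w₁ in Set.Ioi (0 : ℝ), ∫ w₂ in Set.Ioi (0 : ℝ),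
    (Real.sqrt (g * w₁ / ν₁ + h * w₂ / ν₂) / Real.sqrt (2 * Real.pi * (g + h))) *
      Real.exp (-(t ^ 2 / (2 * (g + h))) * (g * w₁ / ν₁ + h * w₂ / ν₂)) *
      (w₁ ^ ((ν₁ : ℝ) / 2 - 1) * Real.exp (-w₁ / 2) /
        ((2 : ℝ) ^ ((ν₁ : ℝ) / 2) * Real.Gamma ((ν₁ : ℝ) / 2))) *
      (w₂ ^ ((ν₂ : ℝ) / 2 - 1) * Real.exp (-w₂ / 2) /
        ((2 : ℝ) ^ ((ν₂ : ℝ) / 2) * Real.Gamma ((ν₂ : ℝ) / 2)))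

open Set Real

theorem integral_Ioi_rpow_sub_one_mul_eq_comp_mul_left {k : ℝ} (hk : 0 < k) (s : ℝ)
    (f : ℝ → ℝ) :
    ∫ w in Ioi (0:ℝ), w ^ (s - 1) * f w = k ^ s * ∫ x in Ioi (0:ℝ), x ^ (s - 1) * f (k * x) := by
  have hsub := integral_comp_mul_left_Ioi (fun w => w ^ (s - 1) * f w) 0 hk
  have hpow : ∫ x in Ioi (0:ℝ), (k * x) ^ (s - 1) * f (k * x) =
      k ^ (s - 1) * ∫ x in Ioi (0:ℝ), x ^ (s - 1) * f (k * x) := by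
    rw [← integral_const_mul]
    refine setIntegral_congr_fun measurableSet_Ioi fun x hx => ?_
    rw [mul_rpow hk.le (le_of_lt hx), mul_assoc]
  rw [mul_zero, smul_eq_mul, hpow] at hsub
  rw [show s = 1 + (s - 1) by ring, rpow_add hk, rpow_one, add_sub_cancel_left, mul_assoc, hsub,
    mul_inv_cancel_left₀ hk.ne']

theorem integral_Ioi_Ioi_rpow_sub_one_mul_comp_div {k₁ k₂ : ℝ} (hk₁ : 0 < k₁) (hk₂ : 0 < k₂)
    (a b : ℝ) (E : ℝ → ℝ → ℝ) :
    ∫ w₁ in Ioi (0:ℝ), ∫ w₂ in Ioi (0:ℝ), w₁ ^ (a - 1) * (w₂ ^ (b - 1) * E (w₁ / k₁) (w₂ / k₂)) =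
      k₁ ^ a * k₂ ^ b * ∫ x in Ioi (0:ℝ), ∫ y in Ioi (0:ℝ), x ^ (a - 1) * (y ^ (b - 1) * E x y) := by
  have hinner : ∀ z, ∫ w₂ in Ioi (0:ℝ), w₂ ^ (b - 1) * E z (w₂ / k₂) =
      k₂ ^ b * ∫ y in Ioi (0:ℝ), y ^ (b - 1) * E z y := fun z => by
    rw [integral_Ioi_rpow_sub_one_mul_eq_comp_mul_left hk₂]
    simp only [mul_div_cancel_left₀ _ hk₂.ne']
  simp_rw [integral_const_mul, hinner, mul_left_comm _ (k₂ ^ b), integral_const_mul]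
  rw [integral_Ioi_rpow_sub_one_mul_eq_comp_mul_left hk₁ a]
  simp only [mul_div_cancel_left₀ _ hk₁.ne']
  ring

theorem integrableOn_Ioi_rpow_sub_one_mul_exp_neg_mul {c r : ℝ} (hc : 0 < c) (hr : 0 < r) :
    IntegrableOn (fun x : ℝ => x ^ (c - 1) * exp (-(r * x))) (Ioi 0) :=
  .of_integral_ne_zero (by rw [integral_rpow_mul_exp_neg_mul_Ioi hc hr]; positivity)

theorem integrableOn_betaIntegrand_Ioo {a b : ℝ} (ha : 0 < a) (hb : 0 < b) :
    IntegrableOn (fun u : ℝ => u ^ (a - 1) * (1 - u) ^ (b - 1)) (Ioo 0 1) := by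
  have hcomplex : IntegrableOn (fun u : ℝ => ((u : ℂ) ^ ((a : ℂ) - 1) * (1 - u) ^ ((b : ℂ) - 1)).re)
      (Ioc 0 1) :=
    (Complex.betaIntegral_convergent (u := a) (v := b) (by simpa) (by simpa)).1.re
  refine (hcomplex.congr_fun (fun u hu => ?_) measurableSet_Ioc).mono_set Ioo_subset_Ioc_self
  simp only [← Complex.ofReal_one, ← Complex.ofReal_sub, ← Complex.ofReal_cpow hu.1.le,
    ← Complex.ofReal_cpow (sub_nonneg.2 hu.2), ← Complex.ofReal_mul, Complex.ofReal_re]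

theorem integrableOn_betaIntegrand_mul_rpow_neg {a b A B c : ℝ} (ha : 0 < a) (hb : 0 < b)
    (hA : 0 < A) (hB : 0 < B) (hc : 0 ≤ c) :
    IntegrableOn (fun u : ℝ => u ^ (a - 1) * (1 - u) ^ (b - 1) * (A * u + B * (1 - u)) ^ (-c))
      (Ioo 0 1) := by
  refine (integrableOn_betaIntegrand_Ioo ha hb).mul_bdd (c := min A B ^ (-c))
    (Measurable.aestronglyMeasurable (by fun_prop))
    ((ae_restrict_mem measurableSet_Ioo).mono fun u hu => ?_)
  have hmin : min A B ≤ A * u + B * (1 - u) := by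
    nlinarith [min_le_left A B, min_le_right A B, hu.1, hu.2]
  rw [norm_of_nonneg (rpow_nonneg ((lt_min hA hB).le.trans hmin) _)]
  exact rpow_le_rpow_of_nonpos (lt_min hA hB) hmin (neg_nonpos.2 hc)

theorem image_inv_sub_one_Ioo : (fun u : ℝ => u⁻¹ - 1) '' Ioo 0 1 = Ioi 0 := by
  ext v
  simp only [mem_image, mem_Ioo, mem_Ioi]
  constructor
  · rintro ⟨u, ⟨hu₀, hu₁⟩, rfl⟩
    linarith [(one_lt_inv₀ hu₀).mpr hu₁]
  · intro hv
    refine ⟨(1 + v)⁻¹, ⟨by positivity, ?_⟩, by rw [inv_inv]; ring⟩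
    rw [inv_lt_one₀ (by positivity)]
    linarith

theorem hasDerivWithinAt_inv_sub_one {u : ℝ} (hu : u ∈ Ioo (0:ℝ) 1) :
    HasDerivWithinAt (fun u : ℝ => u⁻¹ - 1) (-(u ^ 2)⁻¹) (Ioo 0 1) u :=
  ((hasDerivAt_inv hu.1.ne').sub_const 1).hasDerivWithinAt

theorem injOn_inv_sub_one : InjOn (fun u : ℝ => u⁻¹ - 1) (Ioo 0 1) :=
  fun _ _ _ _ h => inv_injective (sub_left_injective h)

theorem integrableOn_Ioi_iff_integrableOn_Ioo_comp_inv_sub_one (f : ℝ → ℝ) :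
    IntegrableOn f (Ioi 0) ↔ IntegrableOn (fun u => (u ^ 2)⁻¹ * f (u⁻¹ - 1)) (Ioo 0 1) := by
  rw [← image_inv_sub_one_Ioo, integrableOn_image_iff_integrableOn_abs_deriv_smul
    measurableSet_Ioo (fun _ => hasDerivWithinAt_inv_sub_one) injOn_inv_sub_one]
  simp only [abs_neg, abs_inv, abs_pow, sq_abs, smul_eq_mul]

theorem integral_Ioi_eq_integral_Ioo_comp_inv_sub_one (f : ℝ → ℝ) :
    ∫ v in Ioi 0, f v = ∫ u in Ioo 0 1, (u ^ 2)⁻¹ * f (u⁻¹ - 1) := by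
  rw [← image_inv_sub_one_Ioo, integral_image_eq_integral_abs_deriv_smul
    measurableSet_Ioo (fun _ => hasDerivWithinAt_inv_sub_one) injOn_inv_sub_one]
  simp only [abs_neg, abs_inv, abs_pow, sq_abs, smul_eq_mul]

section GammaBeta

variable {a b s A B : ℝ}

theorem integral_Ioi_rpow_add_mul_exp_eq_integral_Ioi_comp_mul {x : ℝ} (hx : 0 < x) :
    ∫ y in Ioi (0:ℝ), x ^ (a - 1) * (y ^ (b - 1) * ((x + y) ^ s * exp (-(A * x + B * y)))) =
      ∫ v in Ioi (0:ℝ), (1 + v) ^ s * v ^ (b - 1) *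
        (x ^ (a + b + s - 1) * exp (-((A + B * v) * x))) := by
  rw [integral_const_mul, integral_Ioi_rpow_sub_one_mul_eq_comp_mul_left hx b,
    ← integral_const_mul, ← integral_const_mul]
  refine setIntegral_congr_fun measurableSet_Ioi fun v hv => ?_
  have hpow : x ^ (a - 1) * x ^ b * x ^ s = x ^ (a + b + s - 1) := by
    rw [← rpow_add hx, ← rpow_add hx]
    ring_nf
  rw [show x + x * v = x * (1 + v) by ring, mul_rpow hx.le (by linarith [mem_Ioi.1 hv]), ← hpow,
    show A * x + B * (x * v) = (A + B * v) * x by ring]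
  ring

theorem integral_Ioi_mul_rpow_sub_one_mul_exp_neg_mul {c : ℝ} (hc : 0 < c) (hA : 0 < A)
    (hB : 0 < B) {v : ℝ} (hv : 0 < v) :
    ∫ x in Ioi (0:ℝ), (1 + v) ^ s * v ^ (b - 1) * (x ^ (c - 1) * exp (-((A + B * v) * x))) =
      (1 + v) ^ s * v ^ (b - 1) * ((1 / (A + B * v)) ^ c * Gamma c) := by
  rw [integral_const_mul, integral_rpow_mul_exp_neg_mul_Ioi hc (by positivity)]

theorem inv_sq_mul_comp_inv_sub_one_eq_gamma_mul {u : ℝ} (hA : 0 < A) (hB : 0 < B)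
    (hu : u ∈ Ioo (0:ℝ) 1) :
    (u ^ 2)⁻¹ * ((1 + (u⁻¹ - 1)) ^ s * (u⁻¹ - 1) ^ (b - 1) *
        ((1 / (A + B * (u⁻¹ - 1))) ^ (a + b + s) * Gamma (a + b + s))) =
      Gamma (a + b + s) *
        (u ^ (a - 1) * (1 - u) ^ (b - 1) * (A * u + B * (1 - u)) ^ (-(a + b + s))) := by
  obtain ⟨hu₀, hu₁⟩ := hu
  have h1u : 0 < 1 - u := by linarith
  have hP : 0 < A * u + B * (1 - u) := by positivity
  rw [show 1 + (u⁻¹ - 1) = u⁻¹ by ring, show u⁻¹ - 1 = (1 - u) / u by field_simp,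
    show 1 / (A + B * ((1 - u) / u)) = u / (A * u + B * (1 - u)) by field_simp,
    inv_rpow hu₀.le, div_rpow h1u.le hu₀.le, div_rpow hu₀.le hP.le, rpow_neg hP.le]
  have hpow : (u ^ 2)⁻¹ * (u ^ s)⁻¹ * (u ^ (b - 1))⁻¹ * u ^ (a + b + s) = u ^ (a - 1) := by
    rw [← rpow_natCast, ← rpow_neg hu₀.le, ← rpow_neg hu₀.le, ← rpow_neg hu₀.le, ← rpow_add hu₀,
      ← rpow_add hu₀, ← rpow_add hu₀]
    congr 1
    push_cast
    ring
  rw [← hpow]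
  field_simp

theorem integrableOn_Ioi_mul_rpow_mul_one_div_rpow (ha : 0 < a) (hb : 0 < b) (hA : 0 < A)
    (hB : 0 < B) (hc : 0 < a + b + s) :
    IntegrableOn (fun v : ℝ => (1 + v) ^ s * v ^ (b - 1) *
      ((1 / (A + B * v)) ^ (a + b + s) * Gamma (a + b + s))) (Ioi 0) := by
  rw [integrableOn_Ioi_iff_integrableOn_Ioo_comp_inv_sub_one]
  exact IntegrableOn.congr_fun
    ((integrableOn_betaIntegrand_mul_rpow_neg ha hb hA hB hc.le).const_mul _)
    (fun u hu => (inv_sq_mul_comp_inv_sub_one_eq_gamma_mul hA hB hu).symm) measurableSet_Ioo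

theorem integrable_prod_mul_rpow_sub_one_mul_exp_neg_mul (ha : 0 < a) (hb : 0 < b) (hA : 0 < A)
    (hB : 0 < B) (hc : 0 < a + b + s) :
    Integrable (Function.uncurry fun x v : ℝ => (1 + v) ^ s * v ^ (b - 1) *
        (x ^ (a + b + s - 1) * exp (-((A + B * v) * x))))
      ((volume.restrict (Ioi 0)).prod (volume.restrict (Ioi 0))) := by
  rw [integrable_prod_iff' (Measurable.aestronglyMeasurable (by fun_prop))]
  simp only [Function.uncurry_apply_pair]
  refine ⟨(ae_restrict_mem measurableSet_Ioi).mono fun v hv => ?_, ?_⟩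
  · have hv : 0 < v := hv
    exact (integrableOn_Ioi_rpow_sub_one_mul_exp_neg_mul (r := A + B * v) hc
      (by positivity)).const_mul _
  refine (integrableOn_Ioi_mul_rpow_mul_one_div_rpow ha hb hA hB hc).congr
    ((ae_restrict_mem measurableSet_Ioi).mono fun v hv => ?_)
  have hv : 0 < v := hv
  dsimp only
  rw [← integral_Ioi_mul_rpow_sub_one_mul_exp_neg_mul hc hA hB hv]
  refine setIntegral_congr_fun measurableSet_Ioi fun x hx => ?_
  have hx : 0 < x := hx
  exact (norm_of_nonneg (by positivity)).symm

theorem integral_Ioi_Ioi_rpow_add_mul_exp_eq_gamma_mul_integral (ha : 0 < a) (hb : 0 < b)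
    (hA : 0 < A) (hB : 0 < B) (hc : 0 < a + b + s) :
    ∫ x in Ioi (0:ℝ), ∫ y in Ioi (0:ℝ),
        x ^ (a - 1) * (y ^ (b - 1) * ((x + y) ^ s * exp (-(A * x + B * y)))) =
      Gamma (a + b + s) * ∫ u in (0:ℝ)..1,
        u ^ (a - 1) * (1 - u) ^ (b - 1) * (A * u + B * (1 - u)) ^ (-(a + b + s)) := by
  calc _ = ∫ x in Ioi (0:ℝ), ∫ v in Ioi (0:ℝ), (1 + v) ^ s * v ^ (b - 1) *
          (x ^ (a + b + s - 1) * exp (-((A + B * v) * x))) :=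
        setIntegral_congr_fun measurableSet_Ioi fun x hx =>
          integral_Ioi_rpow_add_mul_exp_eq_integral_Ioi_comp_mul hx
    _ = ∫ v in Ioi (0:ℝ), ∫ x in Ioi (0:ℝ), (1 + v) ^ s * v ^ (b - 1) *
          (x ^ (a + b + s - 1) * exp (-((A + B * v) * x))) :=
        integral_integral_swap (integrable_prod_mul_rpow_sub_one_mul_exp_neg_mul ha hb hA hB hc)
    _ = ∫ v in Ioi (0:ℝ), (1 + v) ^ s * v ^ (b - 1) *
          ((1 / (A + B * v)) ^ (a + b + s) * Gamma (a + b + s)) :=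
        setIntegral_congr_fun measurableSet_Ioi fun v hv =>
          integral_Ioi_mul_rpow_sub_one_mul_exp_neg_mul hc hA hB hv
    _ = ∫ u in Ioo (0:ℝ) 1, Gamma (a + b + s) *
          (u ^ (a - 1) * (1 - u) ^ (b - 1) * (A * u + B * (1 - u)) ^ (-(a + b + s))) := by
        rw [integral_Ioi_eq_integral_Ioo_comp_inv_sub_one]
        exact setIntegral_congr_fun measurableSet_Ioo fun u hu =>
          inv_sq_mul_comp_inv_sub_one_eq_gamma_mul hA hB hu
    _ = _ := by
        rw [integral_const_mul, intervalIntegral.integral_of_le zero_le_one,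
          integral_Ioc_eq_integral_Ioo]

end GammaBeta

theorem behrensFisherPDF_eq_mul_integral_Ioi_Ioi {g h : ℝ} (hg : g ≠ 0) (hh : h ≠ 0)
    {ν₁ ν₂ : ℕ} (hν₁ : ν₁ ≠ 0) (hν₂ : ν₂ ≠ 0) (t : ℝ) :
    behrensFisherPDF ν₁ ν₂ g h t =
      (√(2 * π * (g + h)) * (2 ^ ((ν₁ : ℝ) / 2) * Gamma (ν₁ / 2)) *
        (2 ^ ((ν₂ : ℝ) / 2) * Gamma (ν₂ / 2)))⁻¹ *
      ∫ w₁ in Ioi (0:ℝ), ∫ w₂ in Ioi (0:ℝ), w₁ ^ ((ν₁ : ℝ) / 2 - 1) * (w₂ ^ ((ν₂ : ℝ) / 2 - 1) *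
        ((w₁ / (ν₁ / g) + w₂ / (ν₂ / h)) ^ (1 / 2 : ℝ) *
          exp (-((t ^ 2 / (2 * (g + h)) + ν₁ / (2 * g)) * (w₁ / (ν₁ / g)) +
            (t ^ 2 / (2 * (g + h)) + ν₂ / (2 * h)) * (w₂ / (ν₂ / h)))))) := by
  rw [behrensFisherPDF, ← integral_const_mul]
  congr 1 with w₁
  rw [← integral_const_mul]
  congr 1 with w₂
  set α := t ^ 2 / (2 * (g + h))
  have hexp : exp (-α * (g * w₁ / ν₁ + h * w₂ / ν₂)) * exp (-w₁ / 2) * exp (-w₂ / 2) =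
      exp (-((α + ν₁ / (2 * g)) * (w₁ / (ν₁ / g)) + (α + ν₂ / (2 * h)) * (w₂ / (ν₂ / h)))) := by
    rw [← exp_add, ← exp_add]
    congr 1
    field_simp
    ring
  have hbase : w₁ / (ν₁ / g) + w₂ / (ν₂ / h) = g * w₁ / ν₁ + h * w₂ / ν₂ := by
    field_simp
  rw [← hexp, hbase, sqrt_eq_rpow]
  ring

/-- **Euler–Beta collapse of the Behrens–Fisher double integral.**
With `a = ν₁/2`, `b = ν₂/2`, `c = (ν₁+ν₂+1)/2` and `α(t) = t²/(2(g+h))`,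
`f_T(t) = [(ν₁/g)^a (ν₂/h)^b Γ(c)/(√(2π(g+h)) 2^{a+b} Γ(a) Γ(b))] ·
  ∫₀¹ u^{a-1} (1-u)^{b-1} (α(t) + uν₁/(2g) + (1-u)ν₂/(2h))^{-c} du`. -/
theorem behrensFisher_euler_beta_representation
    (g h : ℝ) (hg : 0 < g) (hh : 0 < h) (ν₁ ν₂ : ℕ) (hν₁ : 0 < ν₁) (hν₂ : 0 < ν₂)
    (t : ℝ) :
    behrensFisherPDF ν₁ ν₂ g h t =
      (((ν₁ : ℝ) / g) ^ ((ν₁ : ℝ) / 2) * ((ν₂ : ℝ) / h) ^ ((ν₂ : ℝ) / 2) *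
          Real.Gamma (((ν₁ : ℝ) + (ν₂ : ℝ) + 1) / 2) /
          (Real.sqrt (2 * Real.pi * (g + h)) *
            (2 : ℝ) ^ ((ν₁ : ℝ) / 2 + (ν₂ : ℝ) / 2) *
            Real.Gamma ((ν₁ : ℝ) / 2) * Real.Gamma ((ν₂ : ℝ) / 2))) *
        ∫ u in (0 : ℝ)..1,
          u ^ ((ν₁ : ℝ) / 2 - 1) * (1 - u) ^ ((ν₂ : ℝ) / 2 - 1) *
            (t ^ 2 / (2 * (g + h)) + u * ν₁ / (2 * g) + (1 - u) * ν₂ / (2 * h)) ^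
              (-(((ν₁ : ℝ) + (ν₂ : ℝ) + 1) / 2)) := by
  have hν₁' : (0:ℝ) < ν₁ := Nat.cast_pos.mpr hν₁
  have hν₂' : (0:ℝ) < ν₂ := Nat.cast_pos.mpr hν₂
  have hα : 0 ≤ t ^ 2 / (2 * (g + h)) := by positivity
  rw [behrensFisherPDF_eq_mul_integral_Ioi_Ioi hg.ne' hh.ne' hν₁.ne' hν₂.ne',
    integral_Ioi_Ioi_rpow_sub_one_mul_comp_div (by positivity) (by positivity) _ _
      (fun x y => (x + y) ^ (1 / 2 : ℝ) * exp (-((t ^ 2 / (2 * (g + h)) + ν₁ / (2 * g)) * x +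
        (t ^ 2 / (2 * (g + h)) + ν₂ / (2 * h)) * y))),
    integral_Ioi_Ioi_rpow_add_mul_exp_eq_gamma_mul_integral (by positivity) (by positivity)
      (by positivity) (by positivity) (by positivity)]
  have hc : (ν₁ : ℝ) / 2 + ν₂ / 2 + 1 / 2 = (ν₁ + ν₂ + 1) / 2 := by ring
  have hbase : ∀ u : ℝ, (t ^ 2 / (2 * (g + h)) + ν₁ / (2 * g)) * u +
      (t ^ 2 / (2 * (g + h)) + ν₂ / (2 * h)) * (1 - u) =
      t ^ 2 / (2 * (g + h)) + u * ν₁ / (2 * g) + (1 - u) * ν₂ / (2 * h) := fun u => by ring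
  simp only [hc, hbase, rpow_add two_pos]
  ring
end

section
/- Suppose g = h and ν₁ = ν₂ = ν′ for a positive integer ν′. Then for every real t, the Behrens–Fisher density reduces to the Student t density with 2ν′ degrees of freedom: f_T(t) = [Γ((2ν′+1)/2) / (√(2ν′·π) · Γ(ν′))] · (1 + t²/(2ν′))^{−(2ν′+1)/2}. -/
open MeasureTheory

open Set



lemma real_beta_Ioo {a : ℝ} (ha : 0 < a) {s : ℝ} (hs : 0 < s) :
    ∫ x in Ioo (0:ℝ) s, x ^ (a - 1) * (s - x) ^ (a - 1) =
      s ^ (2 * a - 1) * (Real.Gamma a ^ 2 / Real.Gamma (2 * a)) := by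
  have hre : 0 < Complex.re (a : ℂ) := by simpa using ha
  have h1 := Complex.betaIntegral_scaled (a : ℂ) (a : ℂ) hs
  have h2 := Complex.Gamma_mul_Gamma_eq_betaIntegral hre hre
  have hG2 : Complex.Gamma ((a : ℂ) + a) ≠ 0 := by
    have : (a : ℂ) + a = ((2 * a : ℝ) : ℂ) := by push_cast; ring
    rw [this, Complex.Gamma_ofReal]
    exact_mod_cast (Real.Gamma_pos_of_pos (by linarith)).ne'
  have hbeta : Complex.betaIntegral (a : ℂ) (a : ℂ) =
      ((Real.Gamma a ^ 2 / Real.Gamma (2 * a) : ℝ) : ℂ) := by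
    have h2a : (a : ℂ) + a = ((2 * a : ℝ) : ℂ) := by push_cast; ring
    push_cast
    rw [← Complex.Gamma_ofReal, ← Complex.Gamma_ofReal, eq_div_iff (h2a ▸ hG2)]
    rw [← h2a, mul_comm, ← h2]
    ring
  apply Complex.ofReal_inj.mp
  rw [show ((∫ x in Ioo (0:ℝ) s, x ^ (a - 1) * (s - x) ^ (a - 1) : ℝ) : ℂ) =
      ∫ x in Ioo (0:ℝ) s, ((x ^ (a - 1) * (s - x) ^ (a - 1) : ℝ) : ℂ) from integral_ofReal.symm]
  have : ∫ x in Ioo (0:ℝ) s, ((x ^ (a - 1) * (s - x) ^ (a - 1) : ℝ) : ℂ) =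
      ∫ x in Ioo (0:ℝ) s, (x : ℂ) ^ ((a : ℂ) - 1) * ((s : ℂ) - x) ^ ((a : ℂ) - 1) := by
    refine setIntegral_congr_fun measurableSet_Ioo fun x hx => ?_
    push_cast
    rw [show ((a:ℂ) - 1) = ((a - 1 : ℝ):ℂ) by push_cast; ring,
      ← Complex.ofReal_cpow hx.1.le, show ((s:ℂ) - (x:ℂ)) = ((s - x : ℝ):ℂ) by push_cast; ring,
      ← Complex.ofReal_cpow (by linarith [hx.2])]
  rw [this]
  have hIoo : ∫ x in Ioo (0:ℝ) s, (x : ℂ) ^ ((a : ℂ) - 1) * ((s : ℂ) - x) ^ ((a : ℂ) - 1) =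
      ∫ x in (0:ℝ)..s, (x : ℂ) ^ ((a : ℂ) - 1) * ((s : ℂ) - x) ^ ((a : ℂ) - 1) := by
    rw [intervalIntegral.integral_of_le hs.le, integral_Ioc_eq_integral_Ioo]
  rw [hIoo, h1, hbeta]
  have : ((a : ℂ) + a - 1) = ((2 * a - 1 : ℝ) : ℂ) := by push_cast; ring
  rw [this, ← Complex.ofReal_cpow hs.le]
  push_cast
  ring

lemma intOn_aux {c lam : ℝ} (hc : -1 < c) (hlam : 0 < lam) :
    IntegrableOn (fun x : ℝ => x ^ c * Real.exp (-(lam * x))) (Ioi 0) := by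
  have h := integrableOn_rpow_mul_exp_neg_mul_rpow hc zero_lt_one hlam
  refine h.congr_fun (fun x hx => ?_) measurableSet_Ioi
  dsimp only
  rw [Real.rpow_one, neg_mul]

lemma sqrt_add_le_aux {x y : ℝ} (hx : 0 ≤ x) (hy : 0 ≤ y) :
    Real.sqrt (x + y) ≤ Real.sqrt x + Real.sqrt y := by
  rw [show x + y = Real.sqrt x ^ 2 + Real.sqrt y ^ 2 by
    rw [Real.sq_sqrt hx, Real.sq_sqrt hy]]
  calc Real.sqrt (Real.sqrt x ^ 2 + Real.sqrt y ^ 2)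
      ≤ Real.sqrt ((Real.sqrt x + Real.sqrt y) ^ 2) := by
        apply Real.sqrt_le_sqrt; nlinarith [Real.sqrt_nonneg x, Real.sqrt_nonneg y]
    _ = Real.sqrt x + Real.sqrt y := by
        rw [Real.sqrt_sq (by positivity)]

lemma double_integral_eq {a lam : ℝ} (ha : 0 < a) (hlam : 0 < lam) :
    ∫ x in Ioi (0:ℝ), ∫ y in Ioi (0:ℝ),
        Real.sqrt (x + y) * (x ^ (a-1) * Real.exp (-(lam*x))) * (y ^ (a-1) * Real.exp (-(lam*y)))
      = (Real.Gamma a ^ 2 / Real.Gamma (2*a)) *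
          ((1/lam) ^ (2*a + 1/2) * Real.Gamma (2*a + 1/2)) := by
  set φ : ℝ → ℝ := fun x => x ^ (a-1) * Real.exp (-(lam*x)) with hφ
  set G : ℝ × ℝ → ℝ := fun p => Real.sqrt (p.1 + p.2) * φ p.1 * φ p.2 with hG
  set B : ℝ := Real.Gamma a ^ 2 / Real.Gamma (2*a) with hB
  have hφm : Measurable φ := by fun_prop
  have hGm : Measurable G := by fun_prop
  have hφnn : ∀ x : ℝ, 0 ≤ x → 0 ≤ φ x := fun x hx => by positivity
  -- integrable majorants
  set u : ℝ → ℝ := indicator (Ioi 0) φ with hu_def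
  set v : ℝ → ℝ := indicator (Ioi 0) (fun x => x ^ (a - 1/2) * Real.exp (-(lam*x))) with hv_def
  have hu : Integrable u := by
    rw [hu_def, integrable_indicator_iff measurableSet_Ioi]
    exact intOn_aux (by linarith) hlam
  have hv : Integrable v := by
    rw [hv_def, integrable_indicator_iff measurableSet_Ioi]
    exact intOn_aux (by linarith) hlam
  have hunn : ∀ x, 0 ≤ u x := by
    intro x; rw [hu_def]
    apply indicator_nonneg; intro y hy; exact hφnn y (le_of_lt hy)
  have hvnn : ∀ x, 0 ≤ v x := by
    intro x; rw [hv_def]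
    apply indicator_nonneg; intro y hy
    have hy' : (0:ℝ) < y := hy
    positivity
  have hsqphi : ∀ x : ℝ, 0 < x → Real.sqrt x * φ x = x ^ (a - 1/2) * Real.exp (-(lam*x)) := by
    intro x hx
    rw [hφ, Real.sqrt_eq_rpow, ← mul_assoc, ← Real.rpow_add hx]
    congr 1
    ring_nf
  -- integrability of the indicator of G on the product
  have hIntG : Integrable (indicator (Ioi 0 ×ˢ Ioi 0) G) (volume.prod volume) := by
    refine Integrable.mono' ((hv.mul_prod hu).add (hu.mul_prod hv))
      ((hGm.indicator (measurableSet_Ioi.prod measurableSet_Ioi)).aestronglyMeasurable)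
      (ae_of_all _ fun p => ?_)
    by_cases hp : p ∈ Ioi (0:ℝ) ×ˢ Ioi (0:ℝ)
    · rw [Set.mem_prod] at hp
      obtain ⟨hx', hy'⟩ := hp
      rw [indicator_of_mem (Set.mem_prod.mpr ⟨hx', hy'⟩)]
      have hx : (0:ℝ) < p.1 := hx'
      have hy : (0:ℝ) < p.2 := hy'
      have hGnn : 0 ≤ G p := by
        rw [hG]
        have := hφnn p.1 hx.le; have := hφnn p.2 hy.le
        positivity
      rw [Real.norm_eq_abs, abs_of_nonneg hGnn, hG]
      have hb : Real.sqrt (p.1 + p.2) * φ p.1 * φ p.2 ≤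
          (Real.sqrt p.1 + Real.sqrt p.2) * φ p.1 * φ p.2 := by
        have := hφnn p.1 hx.le; have := hφnn p.2 hy.le
        gcongr
        exact sqrt_add_le_aux hx.le hy.le
      refine hb.trans (le_of_eq ?_)
      have hu1 : u p.1 = φ p.1 := indicator_of_mem (mem_Ioi.mpr hx) _
      have hu2 : u p.2 = φ p.2 := indicator_of_mem (mem_Ioi.mpr hy) _
      have hv1 : v p.1 = p.1 ^ (a - 1/2) * Real.exp (-(lam*p.1)) :=
        indicator_of_mem (mem_Ioi.mpr hx) _
      have hv2 : v p.2 = p.2 ^ (a - 1/2) * Real.exp (-(lam*p.2)) :=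
        indicator_of_mem (mem_Ioi.mpr hy) _
      simp only [Pi.add_apply]
      rw [hu1, hu2, hv1, hv2, ← hsqphi p.1 hx, ← hsqphi p.2 hy]
      ring
    · rw [indicator_of_notMem hp, norm_zero]
      exact add_nonneg (mul_nonneg (hvnn _) (hunn _)) (mul_nonneg (hunn _) (hvnn _))
  -- step 2 : iterated integral = integral over product measure of indicator
  have step2 : (∫ x in Ioi (0:ℝ), ∫ y in Ioi (0:ℝ), G (x, y))
      = ∫ p, indicator (Ioi 0 ×ˢ Ioi 0) G p ∂(volume.prod volume) := by
    have hint2 : Integrable (fun z : ℝ × ℝ => G z)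
        ((volume.restrict (Ioi 0)).prod (volume.restrict (Ioi 0))) := by
      rw [Measure.prod_restrict]
      exact (integrable_indicator_iff (measurableSet_Ioi.prod measurableSet_Ioi)).mp hIntG
    rw [integral_indicator (measurableSet_Ioi.prod measurableSet_Ioi), ← Measure.prod_restrict]
    exact integral_integral (f := fun x y => G (x, y)) hint2
  -- step 3 : change of variables (s, x) ↦ (x, s - x)
  set T : ℝ × ℝ → ℝ × ℝ := fun p => (p.2, p.1 - p.2) with hT
  have hTmp : MeasurePreserving T (volume.prod volume) (volume.prod volume) :=
    measurePreserving_prod_sub_swap volume volume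
  have hTemb : MeasurableEmbedding T := by
    let e : (ℝ × ℝ) ≃ᵐ (ℝ × ℝ) :=
      { toEquiv := Equiv.mk (fun p => (p.2, p.1 - p.2)) (fun q => (q.1 + q.2, q.1))
          (fun p => by simp) (fun q => by simp)
        measurable_toFun := measurable_snd.prodMk (measurable_fst.sub measurable_snd)
        measurable_invFun := (measurable_fst.add measurable_snd).prodMk measurable_fst }
    exact e.measurableEmbedding
  set S' : Set (ℝ × ℝ) := {q : ℝ × ℝ | 0 < q.2 ∧ q.2 < q.1} with hS'
  have hS'm : MeasurableSet S' :=
    (measurableSet_lt measurable_const measurable_snd).inter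
      (measurableSet_lt measurable_snd measurable_fst)
  set H : ℝ × ℝ → ℝ := fun q => Real.sqrt q.1 * φ q.2 * φ (q.1 - q.2) with hH
  have hfun : (fun p => indicator (Ioi 0 ×ˢ Ioi 0) G (T p)) = indicator S' H := by
    funext p
    by_cases hp : 0 < p.2 ∧ p.2 < p.1
    · rw [indicator_of_mem (show T p ∈ Ioi (0:ℝ) ×ˢ Ioi (0:ℝ) from
        ⟨hp.1, mem_Ioi.mpr (sub_pos.mpr hp.2)⟩), indicator_of_mem (show p ∈ S' from hp)]
      show Real.sqrt (p.2 + (p.1 - p.2)) * φ p.2 * φ (p.1 - p.2) = H p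
      rw [show p.2 + (p.1 - p.2) = p.1 by ring]
    · rw [indicator_of_notMem (show T p ∉ Ioi (0:ℝ) ×ˢ Ioi (0:ℝ) by
        intro hmem; exact hp ⟨hmem.1, sub_pos.mp hmem.2⟩),
        indicator_of_notMem (show p ∉ S' from hp)]
  have step3 : ∫ p, indicator (Ioi 0 ×ˢ Ioi 0) G p ∂(volume.prod volume)
      = ∫ p, indicator S' H p ∂(volume.prod volume) := by
    rw [← hTmp.integral_comp hTemb (indicator (Ioi 0 ×ˢ Ioi 0) G)]
    exact congrArg (fun f => ∫ p, f p ∂(volume.prod volume)) hfun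
  have hI' : Integrable (indicator S' H) (volume.prod volume) := by
    rw [← hfun]
    exact (hTmp.integrable_comp_emb hTemb).mpr hIntG
  -- step 5: to iterated
  have step5 : ∫ p, indicator S' H p ∂(volume.prod volume)
      = ∫ s, ∫ x, indicator S' H (s, x) := integral_prod _ hI'
  -- step 6 : inner integral
  have step6 : ∀ s : ℝ, (∫ x, indicator S' H (s, x))
      = indicator (Ioi 0) (fun s => Real.sqrt s * Real.exp (-(lam*s)) * (s ^ (2*a-1) * B)) s := by
    intro s
    have hind : (fun x => indicator S' H (s, x))
        = indicator (Ioo 0 s) (fun x => Real.sqrt s * φ x * φ (s - x)) := by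
      funext x
      simp only [indicator_apply, hS', mem_setOf_eq, mem_Ioo, hH]
    rw [hind, integral_indicator measurableSet_Ioo]
    by_cases hs : 0 < s
    · rw [indicator_of_mem (mem_Ioi.mpr hs)]
      have : ∫ x in Ioo (0:ℝ) s, Real.sqrt s * φ x * φ (s - x)
          = ∫ x in Ioo (0:ℝ) s,
              (Real.sqrt s * Real.exp (-(lam*s))) * (x ^ (a-1) * (s - x) ^ (a-1)) := by
        refine setIntegral_congr_fun measurableSet_Ioo fun x hx => ?_
        rw [hφ]
        rw [show Real.sqrt s * (x ^ (a-1) * Real.exp (-(lam*x))) *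
            ((s - x) ^ (a-1) * Real.exp (-(lam*(s-x))))
          = Real.sqrt s * (Real.exp (-(lam*x)) * Real.exp (-(lam*(s-x)))) *
              (x ^ (a-1) * (s - x) ^ (a-1)) by ring, ← Real.exp_add]
        ring_nf
      rw [this, integral_const_mul, real_beta_Ioo ha hs, ← hB]
    · rw [indicator_of_notMem (by simpa using hs), Ioo_eq_empty (by intro h; exact hs (h.trans_le (le_refl s)) ), Measure.restrict_empty, integral_zero_measure]
  -- assemble
  calc (∫ x in Ioi (0:ℝ), ∫ y in Ioi (0:ℝ),
        Real.sqrt (x + y) * (x ^ (a-1) * Real.exp (-(lam*x))) * (y ^ (a-1) * Real.exp (-(lam*y))))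
      = ∫ s, ∫ x, indicator S' H (s, x) := by rw [← step5, ← step3, ← step2]
    _ = ∫ s, indicator (Ioi 0)
          (fun s => Real.sqrt s * Real.exp (-(lam*s)) * (s ^ (2*a-1) * B)) s := by
        exact integral_congr_ae (ae_of_all _ step6)
    _ = ∫ s in Ioi (0:ℝ), Real.sqrt s * Real.exp (-(lam*s)) * (s ^ (2*a-1) * B) :=
        integral_indicator measurableSet_Ioi
    _ = ∫ s in Ioi (0:ℝ), B * (s ^ ((2*a + 1/2) - 1) * Real.exp (-(lam*s))) := by
        refine setIntegral_congr_fun measurableSet_Ioi fun s hs => ?_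
        rw [Real.sqrt_eq_rpow, show (2*a + 1/2 - 1) = 1/2 + (2*a - 1) by ring,
          Real.rpow_add (mem_Ioi.mp hs)]
        ring
    _ = B * ((1/lam) ^ (2*a + 1/2) * Real.Gamma (2*a + 1/2)) := by
        rw [integral_const_mul, Real.integral_rpow_mul_exp_neg_mul_Ioi (by linarith) hlam]

/-- **Equal-variance reduction to Student's t.**
If `g = h` and `ν₁ = ν₂ = ν'`, then the Behrens–Fisher density is the Student `t`
density with `2ν'` degrees of freedom:
`f_T(t) = Γ((2ν'+1)/2)/(√(2ν'π) Γ(ν')) (1 + t²/(2ν'))^{-(2ν'+1)/2}`. -/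
theorem behrensFisher_equal_variance_student_t
    (g h : ℝ) (hg : 0 < g) (hh : 0 < h) (ν' : ℕ) (hν' : 0 < ν')
    (hgh : g = h) (t : ℝ) :
    behrensFisherPDF ν' ν' g h t =
      (Real.Gamma ((2 * (ν' : ℝ) + 1) / 2) /
          (Real.sqrt (2 * (ν' : ℝ) * Real.pi) * Real.Gamma (ν' : ℝ))) *
        (1 + t ^ 2 / (2 * (ν' : ℝ))) ^ (-((2 * (ν' : ℝ) + 1) / 2)) := by
  subst hgh
  set n : ℝ := (ν' : ℝ) with hn_def
  have hn : 0 < n := by rw [hn_def]; exact_mod_cast hν'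
  set a : ℝ := n / 2 with ha_def
  have ha : 0 < a := by positivity
  set lam : ℝ := 1/2 + t^2/(4*n) with hlam_def
  have hlam : 0 < lam := by positivity
  have hΓa : 0 < Real.Gamma a := Real.Gamma_pos_of_pos ha
  have hΓn : 0 < Real.Gamma n := Real.Gamma_pos_of_pos hn
  have h2a : (0:ℝ) < (2:ℝ)^a := Real.rpow_pos_of_pos two_pos a
  set D : ℝ := (2:ℝ)^a * Real.Gamma a with hD_def
  have hD : 0 < D := by rw [hD_def]; positivity
  have hsπ : 0 < Real.sqrt (4*Real.pi*n) := Real.sqrt_pos.mpr (by positivity)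
  set K : ℝ := (Real.sqrt (4*Real.pi*n) * D^2)⁻¹ with hK_def
  have key : behrensFisherPDF ν' ν' g g t
      = K * ∫ x in Set.Ioi (0:ℝ), ∫ y in Set.Ioi (0:ℝ),
          Real.sqrt (x+y) * (x^(a-1)*Real.exp (-(lam*x))) * (y^(a-1)*Real.exp (-(lam*y))) := by
    rw [behrensFisherPDF, ← integral_const_mul]
    refine setIntegral_congr_fun measurableSet_Ioi fun x hx => ?_
    rw [← integral_const_mul]
    refine setIntegral_congr_fun measurableSet_Ioi fun y hy => ?_
    have hx : (0:ℝ) < x := hx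
    have hy : (0:ℝ) < y := hy
    have hratio : Real.sqrt (g * x / n + g * y / n) / Real.sqrt (2 * Real.pi * (g + g))
        = Real.sqrt (x + y) / Real.sqrt (4 * Real.pi * n) := by
      rw [show g * x / n + g * y / n = (g/n) * (x+y) by ring,
        show 2 * Real.pi * (g + g) = (g/n) * (4 * Real.pi * n) by field_simp; ring,
        Real.sqrt_mul (by positivity), Real.sqrt_mul (by positivity),
        mul_div_mul_left _ _ (by positivity : Real.sqrt (g/n) ≠ 0)]
    have hexp : Real.exp (-(t ^ 2 / (2 * (g + g))) * (g * x / n + g * y / n)) *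
          (Real.exp (-x/2) * Real.exp (-y/2))
        = Real.exp (-(lam*x)) * Real.exp (-(lam*y)) := by
      rw [← Real.exp_add, ← Real.exp_add, ← Real.exp_add]
      congr 1
      rw [hlam_def]
      field_simp
      ring
    have hhalf : (n : ℝ) / 2 = a := ha_def.symm
    rw [hhalf, hratio, hK_def, hD_def]
    have hstep : Real.sqrt (x+y) / Real.sqrt (4*Real.pi*n) *
          Real.exp (-(t ^ 2 / (2 * (g + g))) * (g * x / n + g * y / n)) *
          (x ^ (a-1) * Real.exp (-x/2) / ((2:ℝ)^a * Real.Gamma a)) *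
          (y ^ (a-1) * Real.exp (-y/2) / ((2:ℝ)^a * Real.Gamma a))
        = (Real.exp (-(t ^ 2 / (2 * (g + g))) * (g * x / n + g * y / n)) *
            (Real.exp (-x/2) * Real.exp (-y/2))) *
            (Real.sqrt (x+y) * x^(a-1) * y^(a-1)) *
            (Real.sqrt (4*Real.pi*n) * ((2:ℝ)^a * Real.Gamma a)^2)⁻¹ := by
      field_simp
    rw [hstep, hexp]
    ring
  rw [key, double_integral_eq ha hlam]
  have h2an : 2 * a = n := by rw [ha_def]; ring
  rw [h2an]
  set c : ℝ := 1 + t^2/(2*n) with hc_def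
  have hc : 0 < c := by positivity
  have hcp : (0:ℝ) < c ^ (n + 1/2) := Real.rpow_pos_of_pos hc _
  have hlamc : lam = c / 2 := by rw [hlam_def, hc_def]; field_simp; ring
  have hpow : (1/lam) ^ (n + 1/2) = (2:ℝ)^n * Real.sqrt 2 * (c ^ (n + 1/2))⁻¹ := by
    rw [hlamc, one_div, inv_div, Real.div_rpow (by norm_num) hc.le,
      Real.rpow_add two_pos, ← Real.sqrt_eq_rpow, div_eq_mul_inv]
  have h2sq : ((2:ℝ)^a)^2 = (2:ℝ)^n := by
    rw [sq, ← Real.rpow_add two_pos, show a + a = n by rw [ha_def]; ring]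
  have hsplit : Real.sqrt (4*Real.pi*n) = Real.sqrt 2 * Real.sqrt (2*n*Real.pi) := by
    rw [show 4*Real.pi*n = 2*(2*n*Real.pi) by ring, Real.sqrt_mul (by norm_num)]
  rw [show (2*n+1)/2 = n + 1/2 by ring, Real.rpow_neg hc.le, hpow, hK_def, hD_def,
    mul_pow, h2sq, hsplit]
  have h2n : (0:ℝ) < (2:ℝ)^n := Real.rpow_pos_of_pos two_pos n
  have hs2 : (0:ℝ) < Real.sqrt 2 := by positivity
  have hs2nπ : (0:ℝ) < Real.sqrt (2*n*Real.pi) := Real.sqrt_pos.mpr (by positivity)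
  field_simp
end

section
/- Let K = (ν₁/g)^{a} · (ν₂/h)^{b} · Γ(c) / (√(2π(g+h)) · 2^{a+b} · Γ(a) · Γ(b)) and let L₀ = K · (2(g+h))^{c} · B(a,b), where B denotes the real Beta function. Then the second-order (Ramanujan) tail coefficient of the Behrens–Fisher density is exact: as t → +∞, t² · (t^{ν₁+ν₂+1} · f_T(t) − L₀) converges to −K · c · (2(g+h))^{c+1} · [ (ν₁/(2g)) · B(a+1, b) + (ν₂/(2h)) · B(a, b+1) ]. -/
open MeasureTheory Filter

/-- The real Beta function `B(x,y) = Γ(x)Γ(y)/Γ(x+y)`. -/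
noncomputable def realBeta (x y : ℝ) : ℝ :=
  Real.Gamma x * Real.Gamma y / Real.Gamma (x + y)

section Aux

open Set Real Topology

lemma betaIntegrableOn {p q : ℝ} (hp : 0 < p) (hq : 0 < q) :
    IntegrableOn (fun v : ℝ => v ^ (p - 1) * (1 - v) ^ (q - 1)) (Ioo (0:ℝ) 1) := by
  have hc : IntervalIntegrable (fun x : ℝ => (x : ℂ) ^ ((p : ℂ) - 1) * (1 - (x : ℂ)) ^ ((q : ℂ) - 1))
      volume 0 1 := Complex.betaIntegral_convergent (by simpa using hp) (by simpa using hq)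
  have hcI : IntegrableOn (fun x : ℝ => (x : ℂ) ^ ((p : ℂ) - 1) * (1 - (x : ℂ)) ^ ((q : ℂ) - 1))
      (Ioo (0:ℝ) 1) := by
    have := (intervalIntegrable_iff_integrableOn_Ioc_of_le (by norm_num : (0:ℝ) ≤ 1)).mp hc
    exact this.mono_set Ioo_subset_Ioc_self
  refine Integrable.mono' hcI.norm ?_ ?_
  · exact Measurable.aestronglyMeasurable (by fun_prop)
  · filter_upwards [ae_restrict_mem measurableSet_Ioo] with v hv
    have h1 : ((v:ℂ)) ^ ((p:ℂ) - 1) = ((v ^ (p-1) : ℝ) : ℂ) := by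
      rw [show ((p:ℂ) - 1) = ((p - 1 : ℝ) : ℂ) by push_cast; ring,
        ← Complex.ofReal_cpow hv.1.le]
    have h2 : (1 - (v:ℂ)) ^ ((q:ℂ) - 1) = (((1 - v) ^ (q-1) : ℝ) : ℂ) := by
      rw [show (1 - (v:ℂ)) = ((1 - v : ℝ) : ℂ) by push_cast; ring,
        show ((q:ℂ) - 1) = ((q - 1 : ℝ) : ℂ) by push_cast; ring,
        ← Complex.ofReal_cpow (by linarith [hv.2] : (0:ℝ) ≤ 1 - v)]
    rw [h1, h2, ← Complex.ofReal_mul, Complex.norm_real]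

lemma betaIntegral_Ioo {p q : ℝ} (hp : 0 < p) (hq : 0 < q) :
    ∫ v in Ioo (0:ℝ) 1, v ^ (p - 1) * (1 - v) ^ (q - 1)
      = Real.Gamma p * Real.Gamma q / Real.Gamma (p + q) := by
  have key := Complex.Gamma_mul_Gamma_eq_betaIntegral
    (s := (p:ℂ)) (t := (q:ℂ)) (by simpa using hp) (by simpa using hq)
  have hbeta : Complex.betaIntegral p q
      = ((∫ v in Ioo (0:ℝ) 1, v ^ (p - 1) * (1 - v) ^ (q - 1) : ℝ) : ℂ) := by
    rw [Complex.betaIntegral]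
    rw [intervalIntegral.integral_of_le (by norm_num : (0:ℝ) ≤ 1),
      ← integral_Ioc_eq_integral_Ioo (f := fun v : ℝ => v ^ (p - 1) * (1 - v) ^ (q - 1))]
    rw [show (∫ v in Ioc (0:ℝ) 1, (v:ℂ) ^ ((p:ℂ) - 1) * (1 - (v:ℂ)) ^ ((q:ℂ) - 1))
        = ∫ v in Ioc (0:ℝ) 1, ((v ^ (p-1) * (1 - v) ^ (q-1) : ℝ) : ℂ) from ?_]
    · exact integral_ofReal
    · rw [integral_Ioc_eq_integral_Ioo, integral_Ioc_eq_integral_Ioo]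
      refine setIntegral_congr_fun measurableSet_Ioo fun v hv => ?_
      rw [show ((p:ℂ) - 1) = ((p - 1 : ℝ) : ℂ) by push_cast; ring,
        ← Complex.ofReal_cpow hv.1.le,
        show (1 - (v:ℂ)) = ((1 - v : ℝ) : ℂ) by push_cast; ring,
        show ((q:ℂ) - 1) = ((q - 1 : ℝ) : ℂ) by push_cast; ring,
        ← Complex.ofReal_cpow (by linarith [hv.2] : (0:ℝ) ≤ 1 - v), ← Complex.ofReal_mul]
  rw [hbeta, Complex.Gamma_ofReal, Complex.Gamma_ofReal,
    show ((p:ℂ) + (q:ℂ)) = ((p + q : ℝ) : ℂ) by push_cast; ring, Complex.Gamma_ofReal,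
    ← Complex.ofReal_mul, ← Complex.ofReal_mul] at key
  have := Complex.ofReal_injective key
  have hΓ : Real.Gamma (p + q) ≠ 0 := (Real.Gamma_pos_of_pos (by linarith)).ne'
  field_simp
  linarith [this]

noncomputable def covMap (κ₁ κ₂ : ℝ) : ℝ × ℝ → ℝ × ℝ :=
  fun z => (z.1 * z.2 / κ₁, z.1 * (1 - z.2) / κ₂)

noncomputable def covDeriv (κ₁ κ₂ : ℝ) (z : ℝ × ℝ) : ℝ × ℝ →L[ℝ] ℝ × ℝ :=
  LinearMap.toContinuousLinearMap (Matrix.toLin (Module.Basis.finTwoProd ℝ) (Module.Basis.finTwoProd ℝ)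
    !![z.2 / κ₁, z.1 / κ₁; (1 - z.2) / κ₂, -z.1 / κ₂])

variable {κ₁ κ₂ p q r : ℝ}

lemma covMap_hasFDerivAt (z : ℝ × ℝ) :
    HasFDerivAt (covMap κ₁ κ₂) (covDeriv κ₁ κ₂ z) z := by
  unfold covMap covDeriv
  rw [Matrix.toLin_finTwoProd_toContinuousLinearMap]
  convert HasFDerivAt.prodMk (𝕜 := ℝ)
    ((hasFDerivAt_fst.mul hasFDerivAt_snd).mul_const κ₁⁻¹)
    ((hasFDerivAt_fst.mul ((hasFDerivAt_const 1 z).sub hasFDerivAt_snd)).mul_const κ₂⁻¹) using 2 <;>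
  (ext w <;> (simp [div_eq_inv_mul]; try ring))

lemma covDeriv_det (z : ℝ × ℝ) : (covDeriv κ₁ κ₂ z).det = -(z.1 / (κ₁ * κ₂)) := by
  unfold covDeriv
  simp only [LinearMap.det_toContinuousLinearMap, LinearMap.det_toLin,
    Matrix.det_fin_two_of]
  by_cases h1 : κ₁ = 0
  · simp [h1]
  by_cases h2 : κ₂ = 0
  · simp [h2]
  field_simp
  ring

lemma covMap_injOn (hκ₁ : 0 < κ₁) (hκ₂ : 0 < κ₂) :
    Set.InjOn (covMap κ₁ κ₂) (Ioi (0:ℝ) ×ˢ Ioo (0:ℝ) 1) := by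
  rintro ⟨s, v⟩ ⟨hs, hv⟩ ⟨s', v'⟩ ⟨hs', hv'⟩ heq
  simp only [covMap, Prod.mk.injEq] at heq
  simp only [mem_Ioi, mem_Ioo] at hs hv hs' hv'
  obtain ⟨h1, h2⟩ := heq
  have e1 : s * v = s' * v' := by
    field_simp at h1; linarith [h1]
  have e2 : s * (1 - v) = s' * (1 - v') := by
    field_simp at h2; linarith [h2]
  have hss : s = s' := by nlinarith
  have : v = v' := by
    have hs0 : s ≠ 0 := ne_of_gt hs
    rw [hss] at e1
    exact mul_left_cancel₀ (by rw [← hss]; exact hs0) e1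
  simp [hss, this]

lemma covMap_image (hκ₁ : 0 < κ₁) (hκ₂ : 0 < κ₂) :
    covMap κ₁ κ₂ '' (Ioi (0:ℝ) ×ˢ Ioo (0:ℝ) 1) = Ioi (0:ℝ) ×ˢ Ioi (0:ℝ) := by
  ext ⟨x, y⟩
  simp only [Set.mem_image, Set.mem_prod, mem_Ioi, mem_Ioo, covMap, Prod.mk.injEq, Prod.exists]
  constructor
  · rintro ⟨s, v, ⟨hs, hv0, hv1⟩, rfl, rfl⟩
    constructor
    · positivity
    · have : 0 < 1 - v := by linarith
      positivity
  · rintro ⟨hx, hy⟩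
    refine ⟨κ₁ * x + κ₂ * y, κ₁ * x / (κ₁ * x + κ₂ * y), ⟨by positivity, by positivity, ?_⟩, ?_, ?_⟩
    · rw [div_lt_one (by positivity)]; nlinarith
    · field_simp; try ring
    · have hst : (0:ℝ) < κ₁ * x + κ₂ * y := by positivity
      field_simp
      try ring

lemma covIntegral (hκ₁ : 0 < κ₁) (hκ₂ : 0 < κ₂) (G : ℝ × ℝ → ℝ) :
    ∫ z in Ioi (0:ℝ) ×ˢ Ioi (0:ℝ), G z
      = ∫ z in Ioi (0:ℝ) ×ˢ Ioo (0:ℝ) 1, (z.1 / (κ₁ * κ₂)) * G (covMap κ₁ κ₂ z) := by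
  have hS : MeasurableSet (Ioi (0:ℝ) ×ˢ Ioo (0:ℝ) 1) :=
    measurableSet_Ioi.prod measurableSet_Ioo
  rw [← covMap_image hκ₁ hκ₂,
    integral_image_eq_integral_abs_det_fderiv_smul volume hS
      (fun z _ => (covMap_hasFDerivAt z).hasFDerivWithinAt) (covMap_injOn hκ₁ hκ₂) G]
  refine setIntegral_congr_fun hS fun z hz => ?_
  have h1 : (0:ℝ) < z.1 := hz.1
  rw [covDeriv_det, abs_neg, abs_of_nonneg (by positivity), smul_eq_mul]

lemma covIntegrableOn (hκ₁ : 0 < κ₁) (hκ₂ : 0 < κ₂) (G : ℝ × ℝ → ℝ) :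
    IntegrableOn G (Ioi (0:ℝ) ×ˢ Ioi (0:ℝ)) ↔
      IntegrableOn (fun z => (z.1 / (κ₁ * κ₂)) * G (covMap κ₁ κ₂ z))
        (Ioi (0:ℝ) ×ˢ Ioo (0:ℝ) 1) := by
  have hS : MeasurableSet (Ioi (0:ℝ) ×ˢ Ioo (0:ℝ) 1) :=
    measurableSet_Ioi.prod measurableSet_Ioo
  rw [← covMap_image hκ₁ hκ₂,
    integrableOn_image_iff_integrableOn_abs_det_fderiv_smul volume hS
      (fun z _ => (covMap_hasFDerivAt z).hasFDerivWithinAt) (covMap_injOn hκ₁ hκ₂) G]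
  constructor <;> intro hint <;> refine hint.congr_fun (fun z hz => ?_) hS <;>
    have h1 : (0:ℝ) < z.1 := hz.1
  · beta_reduce
    rw [covDeriv_det, abs_neg, abs_of_nonneg (by positivity), smul_eq_mul]
  · rw [covDeriv_det, abs_neg, abs_of_nonneg (by positivity), smul_eq_mul]

noncomputable def mast (κ₁ κ₂ p q r : ℝ) : ℝ × ℝ → ℝ := fun z =>
  (κ₁ * z.1 + κ₂ * z.2) ^ r * Real.exp (-(κ₁ * z.1 + κ₂ * z.2)) * z.1 ^ (p - 1) * z.2 ^ (q - 1)

@[fun_prop]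
lemma mast_measurable (κ₁ κ₂ p q r : ℝ) : Measurable (mast κ₁ κ₂ p q r) := by
  unfold mast; fun_prop

lemma mast_key (hκ₁ : 0 < κ₁) (hκ₂ : 0 < κ₂) {z : ℝ × ℝ}
    (hz : z ∈ Ioi (0:ℝ) ×ˢ Ioo (0:ℝ) 1) :
    (z.1 / (κ₁ * κ₂)) * mast κ₁ κ₂ p q r (covMap κ₁ κ₂ z)
      = (κ₁ ^ (-p) * κ₂ ^ (-q)) *
        ((z.1 ^ (p + q + r - 1) * Real.exp (-z.1)) * (z.2 ^ (p - 1) * (1 - z.2) ^ (q - 1))) := by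
  obtain ⟨s, v⟩ := z
  obtain ⟨hs, hv0, hv1⟩ : (0:ℝ) < s ∧ (0:ℝ) < v ∧ v < 1 := ⟨hz.1, hz.2.1, hz.2.2⟩
  have h1v : (0:ℝ) < 1 - v := by linarith
  simp only [mast, covMap]
  have hsum : κ₁ * (s * v / κ₁) + κ₂ * (s * (1 - v) / κ₂) = s := by
    field_simp; ring
  rw [hsum]
  have hk1 : κ₁ ^ (-p) = (κ₁ ^ (p - 1) * κ₁)⁻¹ := by
    rw [show -p = -(p - 1 + 1) from by ring, Real.rpow_neg hκ₁.le, Real.rpow_add hκ₁,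
      Real.rpow_one]
  have hk2 : κ₂ ^ (-q) = (κ₂ ^ (q - 1) * κ₂)⁻¹ := by
    rw [show -q = -(q - 1 + 1) from by ring, Real.rpow_neg hκ₂.le, Real.rpow_add hκ₂,
      Real.rpow_one]
  have hsS : s ^ (p + q + r - 1) = s ^ r * s ^ (p - 1) * (s ^ (q - 1) * s) := by
    rw [show p + q + r - 1 = r + (p - 1) + (q - 1 + 1) from by ring,
      Real.rpow_add hs, Real.rpow_add hs, Real.rpow_add hs, Real.rpow_one]
  rw [Real.div_rpow (by positivity) hκ₁.le, Real.div_rpow (by positivity) hκ₂.le,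
    Real.mul_rpow hs.le hv0.le, Real.mul_rpow hs.le h1v.le, hk1, hk2, hsS]
  have e1 : κ₁ ^ (p - 1) ≠ 0 := (Real.rpow_pos_of_pos hκ₁ _).ne'
  have e2 : κ₂ ^ (q - 1) ≠ 0 := (Real.rpow_pos_of_pos hκ₂ _).ne'
  field_simp

lemma mast_integrableOn (hκ₁ : 0 < κ₁) (hκ₂ : 0 < κ₂) (hp : 0 < p) (hq : 0 < q)
    (hpqr : 0 < p + q + r) :
    IntegrableOn (mast κ₁ κ₂ p q r) (Ioi (0:ℝ) ×ˢ Ioi (0:ℝ)) := by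
  rw [covIntegrableOn hκ₁ hκ₂]
  have hS : MeasurableSet (Ioi (0:ℝ) ×ˢ Ioo (0:ℝ) 1) :=
    measurableSet_Ioi.prod measurableSet_Ioo
  have hprod : IntegrableOn
      (fun z : ℝ × ℝ => (κ₁ ^ (-p) * κ₂ ^ (-q)) *
        ((z.1 ^ (p + q + r - 1) * Real.exp (-z.1)) * (z.2 ^ (p - 1) * (1 - z.2) ^ (q - 1))))
      (Ioi (0:ℝ) ×ˢ Ioo (0:ℝ) 1) := by
    have h1 : IntegrableOn (fun x : ℝ => x ^ (p + q + r - 1) * Real.exp (-x)) (Ioi 0) := by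
      have := Real.GammaIntegral_convergent hpqr
      exact this.congr_fun (fun x hx => by rw [mul_comm]) measurableSet_Ioi
    have h2 : IntegrableOn (fun v : ℝ => v ^ (p - 1) * (1 - v) ^ (q - 1)) (Ioo (0:ℝ) 1) :=
      betaIntegrableOn hp hq
    have := (h1.mul_prod h2).const_mul (κ₁ ^ (-p) * κ₂ ^ (-q))
    rwa [IntegrableOn, Measure.volume_eq_prod, ← Measure.prod_restrict]
  exact hprod.congr_fun (fun z hz => (mast_key hκ₁ hκ₂ hz).symm) hS

lemma mast_value (hκ₁ : 0 < κ₁) (hκ₂ : 0 < κ₂) (hp : 0 < p) (hq : 0 < q)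
    (hpqr : 0 < p + q + r) :
    ∫ z in Ioi (0:ℝ) ×ˢ Ioi (0:ℝ), mast κ₁ κ₂ p q r z
      = κ₁ ^ (-p) * κ₂ ^ (-q) *
        (Real.Gamma (p + q + r) * (Real.Gamma p * Real.Gamma q / Real.Gamma (p + q))) := by
  have hS : MeasurableSet (Ioi (0:ℝ) ×ˢ Ioo (0:ℝ) 1) :=
    measurableSet_Ioi.prod measurableSet_Ioo
  rw [covIntegral hκ₁ hκ₂,
    setIntegral_congr_fun hS (fun z hz => mast_key hκ₁ hκ₂ (z := z) hz),
    integral_const_mul]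
  congr 1
  rw [Measure.volume_eq_prod, ← Measure.prod_restrict,
    integral_prod_mul (fun x : ℝ => x ^ (p + q + r - 1) * Real.exp (-x))
      (fun v : ℝ => v ^ (p - 1) * (1 - v) ^ (q - 1))]
  rw [betaIntegral_Ioo hp hq]
  congr 1
  rw [Real.Gamma_eq_integral hpqr]
  exact setIntegral_congr_fun measurableSet_Ioi fun x hx => by rw [mul_comm]

lemma subst_Ioi (φ : ℝ → ℝ) {α : ℝ} (hα : 0 < α) :
    ∫ x in Ioi (0:ℝ), φ x = α⁻¹ * ∫ u in Ioi (0:ℝ), φ (α⁻¹ * u) := by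
  have H := integral_comp_mul_left_Ioi φ 0 (inv_pos.mpr hα)
  rw [mul_zero] at H
  rw [H, inv_inv, smul_eq_mul, ← mul_assoc, inv_mul_cancel₀ hα.ne', one_mul]

lemma claim_pointwise (g h : ℝ) (hg : 0 < g) (hh : 0 < h) (ν₁ ν₂ : ℕ)
    (hν₁ : 0 < ν₁) (hν₂ : 0 < ν₂) {t u₁ u₂ : ℝ} (ht : 0 < t) (hu₁ : 0 < u₁) (hu₂ : 0 < u₂) :
    (Real.sqrt (g * ((t^2/(2*(g+h)))⁻¹ * u₁) / ν₁ + h * ((t^2/(2*(g+h)))⁻¹ * u₂) / ν₂) /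
        Real.sqrt (2 * Real.pi * (g + h))) *
      Real.exp (-(t^2/(2*(g+h))) *
        (g * ((t^2/(2*(g+h)))⁻¹ * u₁) / ν₁ + h * ((t^2/(2*(g+h)))⁻¹ * u₂) / ν₂)) *
      (((t^2/(2*(g+h)))⁻¹ * u₁) ^ ((ν₁:ℝ)/2 - 1) * Real.exp (-((t^2/(2*(g+h)))⁻¹ * u₁)/2) /
        ((2:ℝ)^((ν₁:ℝ)/2) * Real.Gamma ((ν₁:ℝ)/2))) *
      (((t^2/(2*(g+h)))⁻¹ * u₂) ^ ((ν₂:ℝ)/2 - 1) * Real.exp (-((t^2/(2*(g+h)))⁻¹ * u₂)/2) /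
        ((2:ℝ)^((ν₂:ℝ)/2) * Real.Gamma ((ν₂:ℝ)/2))) =
    (t^2/(2*(g+h))) ^ (2 - ((ν₁:ℝ)+(ν₂:ℝ)+1)/2) *
      ((1 / (Real.sqrt (2*Real.pi*(g+h)) * ((2:ℝ)^((ν₁:ℝ)/2) * Real.Gamma ((ν₁:ℝ)/2)) *
          ((2:ℝ)^((ν₂:ℝ)/2) * Real.Gamma ((ν₂:ℝ)/2)))) *
        mast (g/ν₁) (h/ν₂) ((ν₁:ℝ)/2) ((ν₂:ℝ)/2) (1/2) (u₁, u₂) *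
        Real.exp (-(2*(g+h)/(2*t^2)) * (u₁ + u₂))) := by
  have hgh : (0:ℝ) < g + h := by linarith
  have hn1 : (0:ℝ) < (ν₁:ℝ) := by exact_mod_cast hν₁
  have hn2 : (0:ℝ) < (ν₂:ℝ) := by exact_mod_cast hν₂
  set α : ℝ := t^2/(2*(g+h)) with hαdef
  have hα : 0 < α := by positivity
  set S : ℝ := g/(ν₁:ℝ) * u₁ + h/(ν₂:ℝ) * u₂ with hSdef
  have hS : 0 < S := by positivity
  have r1 : g * (α⁻¹ * u₁) / ν₁ + h * (α⁻¹ * u₂) / ν₂ = α⁻¹ * S := by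
    rw [hSdef]; ring
  have r2 : Real.sqrt (α⁻¹ * S) = α ^ (-(1/2) : ℝ) * S ^ ((1:ℝ)/2) := by
    rw [Real.sqrt_eq_rpow, Real.mul_rpow (by positivity) hS.le,
      ← Real.rpow_neg_one α, ← Real.rpow_mul hα.le]
    norm_num
  have r3 : -α * (α⁻¹ * S) = -S := by field_simp
  have r4 : ∀ u p : ℝ, 0 < u → (α⁻¹ * u) ^ (p : ℝ) = α ^ (-p) * u ^ p := by
    intro u p hu
    rw [Real.mul_rpow (by positivity) hu.le, ← Real.rpow_neg_one α,
      ← Real.rpow_mul hα.le]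
    norm_num
  have r5 : Real.exp (-(2*(g+h)/(2*t^2)) * (u₁ + u₂))
      = Real.exp (-(α⁻¹ * u₁)/2) * Real.exp (-(α⁻¹ * u₂)/2) := by
    rw [← Real.exp_add]
    congr 1
    rw [hαdef]
    field_simp
    ring
  have rpowsplit : α ^ (2 - ((ν₁:ℝ)+(ν₂:ℝ)+1)/2)
      = α ^ (-(1/2) : ℝ) * α ^ (-((ν₁:ℝ)/2 - 1)) * α ^ (-((ν₂:ℝ)/2 - 1)) := by
    rw [← Real.rpow_add hα, ← Real.rpow_add hα]
    congr 1
    ring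
  rw [r1, r2, r3, r4 u₁ ((ν₁:ℝ)/2 - 1) hu₁, r4 u₂ ((ν₂:ℝ)/2 - 1) hu₂, r5, rpowsplit]
  simp only [mast]
  rw [show g/(ν₁:ℝ) * u₁ + h/(ν₂:ℝ) * u₂ = S from rfl]
  have ne1 : Real.sqrt (2*Real.pi*(g+h)) ≠ 0 := by
    have : (0:ℝ) < 2*Real.pi*(g+h) := by positivity
    positivity
  have ne2 : (2:ℝ)^((ν₁:ℝ)/2) ≠ 0 := (Real.rpow_pos_of_pos two_pos _).ne'
  have ne3 : (2:ℝ)^((ν₂:ℝ)/2) ≠ 0 := (Real.rpow_pos_of_pos two_pos _).ne'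
  have ne4 : Real.Gamma ((ν₁:ℝ)/2) ≠ 0 := (Real.Gamma_pos_of_pos (by positivity)).ne'
  have ne5 : Real.Gamma ((ν₂:ℝ)/2) ≠ 0 := (Real.Gamma_pos_of_pos (by positivity)).ne'
  field_simp

lemma scalar_limit {M S : ℝ} (hM : 0 < M) :
    Tendsto (fun t : ℝ => t^2 * (Real.exp (-(M/(2*t^2)) * S) - 1)) atTop
      (𝓝 (-(M/2) * S)) := by
  have h1 : Tendsto (fun t : ℝ => M/(2*t^2)) atTop (𝓝[>] 0) := by
    refine tendsto_nhdsWithin_of_tendsto_nhds_of_eventually_within _ ?_ ?_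
    · exact Tendsto.div_atTop tendsto_const_nhds
        ((tendsto_pow_atTop two_ne_zero).const_mul_atTop two_pos)
    · filter_upwards [eventually_gt_atTop (0:ℝ)] with t ht
      exact div_pos hM (by positivity)
  have hd : HasDerivAt (fun x : ℝ => Real.exp (-(x * S))) (-S) 0 := by
    have h0 : HasDerivAt (fun x : ℝ => -(x * S)) (-S) 0 := (hasDerivAt_mul_const S).neg
    simpa using h0.exp
  have h2 : Tendsto (slope (fun x : ℝ => Real.exp (-(x * S))) 0) (𝓝[≠] 0) (𝓝 (-S)) :=
    hasDerivAt_iff_tendsto_slope.mp hd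
  have h1' : Tendsto (fun t : ℝ => M/(2*t^2)) atTop (𝓝[≠] 0) :=
    h1.mono_right (nhdsWithin_mono 0 fun x hx => ne_of_gt hx)
  have h3 := (h2.comp h1').const_mul (M/2)
  refine Tendsto.congr' ?_ (by convert h3 using 2; ring)
  filter_upwards [eventually_gt_atTop (0:ℝ)] with t ht
  have hu : M/(2*t^2) ≠ 0 := by positivity
  simp only [Function.comp, slope_def_field]
  rw [show -(0 * S) = (0:ℝ) from by ring, Real.exp_zero,
    show -(M / (2 * t ^ 2) * S) = -(M / (2 * t ^ 2)) * S from by ring]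
  field_simp
  ring_nf
  rw [mul_right_comm M, mul_inv_cancel₀ hM.ne']
  ring

end Aux

open Set Topology

set_option maxHeartbeats 2000000 in
/-- **Second-order (Ramanujan) tail coefficient of the Behrens–Fisher density.** -/
theorem behrensFisher_second_order_tail
    (g h : ℝ) (hg : 0 < g) (hh : 0 < h) (ν₁ ν₂ : ℕ) (hν₁ : 0 < ν₁) (hν₂ : 0 < ν₂)
    (K L₀ : ℝ)
    (hK : K = ((ν₁ : ℝ) / g) ^ ((ν₁ : ℝ) / 2) * ((ν₂ : ℝ) / h) ^ ((ν₂ : ℝ) / 2) *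
        Real.Gamma (((ν₁ : ℝ) + (ν₂ : ℝ) + 1) / 2) /
        (Real.sqrt (2 * Real.pi * (g + h)) *
          (2 : ℝ) ^ ((ν₁ : ℝ) / 2 + (ν₂ : ℝ) / 2) *
          Real.Gamma ((ν₁ : ℝ) / 2) * Real.Gamma ((ν₂ : ℝ) / 2)))
    (hL₀ : L₀ = K * (2 * (g + h)) ^ (((ν₁ : ℝ) + (ν₂ : ℝ) + 1) / 2) *
        realBeta ((ν₁ : ℝ) / 2) ((ν₂ : ℝ) / 2)) :
    Filter.Tendsto
      (fun t : ℝ =>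
        t ^ 2 * (t ^ (ν₁ + ν₂ + 1) * behrensFisherPDF ν₁ ν₂ g h t - L₀))
      Filter.atTop
      (nhds
        (-K * (((ν₁ : ℝ) + (ν₂ : ℝ) + 1) / 2) *
          (2 * (g + h)) ^ (((ν₁ : ℝ) + (ν₂ : ℝ) + 1) / 2 + 1) *
          (((ν₁ : ℝ) / (2 * g)) * realBeta ((ν₁ : ℝ) / 2 + 1) ((ν₂ : ℝ) / 2) +
            ((ν₂ : ℝ) / (2 * h)) * realBeta ((ν₁ : ℝ) / 2) ((ν₂ : ℝ) / 2 + 1)))) := by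
  have hgh : (0:ℝ) < g + h := by linarith
  have hn1 : (0:ℝ) < (ν₁:ℝ) := by exact_mod_cast hν₁
  have hn2 : (0:ℝ) < (ν₂:ℝ) := by exact_mod_cast hν₂
  set a : ℝ := (ν₁:ℝ)/2 with ha_def
  set b : ℝ := (ν₂:ℝ)/2 with hb_def
  set c : ℝ := ((ν₁:ℝ) + (ν₂:ℝ) + 1)/2 with hc_def
  have ha : 0 < a := by positivity
  have hb : 0 < b := by positivity
  have hc : 0 < c := by positivity
  set M : ℝ := 2 * (g + h) with hM_def
  have hM : 0 < M := by positivity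
  set κ₁ : ℝ := g / (ν₁:ℝ) with hκ₁_def
  set κ₂ : ℝ := h / (ν₂:ℝ) with hκ₂_def
  have hκ₁ : 0 < κ₁ := by positivity
  have hκ₂ : 0 < κ₂ := by positivity
  set C₀ : ℝ := 1 / (Real.sqrt (2 * Real.pi * (g + h)) * ((2:ℝ) ^ a * Real.Gamma a) *
      ((2:ℝ) ^ b * Real.Gamma b)) with hC₀_def
  set Q : Set (ℝ × ℝ) := Ioi (0:ℝ) ×ˢ Ioi (0:ℝ) with hQ_def
  have hQm : MeasurableSet Q := measurableSet_Ioi.prod measurableSet_Ioi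
  set m : ℝ × ℝ → ℝ := mast κ₁ κ₂ a b (1/2) with hm_def
  have hm_meas : Measurable m := mast_measurable _ _ _ _ _
  have hab2 : (0:ℝ) < a + b + 1/2 := by positivity
  have hB : IntegrableOn m Q := mast_integrableOn hκ₁ hκ₂ ha hb hab2
  have hB1 : IntegrableOn (mast κ₁ κ₂ (a+1) b (1/2)) Q :=
    mast_integrableOn hκ₁ hκ₂ (by linarith) hb (by linarith)
  have hB2 : IntegrableOn (mast κ₁ κ₂ a (b+1) (1/2)) Q :=
    mast_integrableOn hκ₁ hκ₂ ha (by linarith) (by linarith)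
  have hsplit : ∀ z ∈ Q, m z * (z.1 + z.2)
      = mast κ₁ κ₂ (a+1) b (1/2) z + mast κ₁ κ₂ a (b+1) (1/2) z := by
    intro z hz
    have h1 : (0:ℝ) < z.1 := hz.1
    have h2 : (0:ℝ) < z.2 := hz.2
    simp only [hm_def, mast]
    rw [show a + 1 - 1 = (a - 1) + 1 from by ring, Real.rpow_add_one h1.ne',
        show b + 1 - 1 = (b - 1) + 1 from by ring, Real.rpow_add_one h2.ne']
    ring
  have hΨ : ∀ ε : ℝ, 0 ≤ ε →
      IntegrableOn (fun z : ℝ × ℝ => C₀ * m z * Real.exp (-ε * (z.1 + z.2))) Q := by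
    intro ε hε
    refine Integrable.mono' (hB.const_mul C₀).abs ?_ ?_
    · exact ((hm_meas.const_mul C₀).mul (by fun_prop)).aestronglyMeasurable
    · filter_upwards [ae_restrict_mem hQm] with z hz
      have h1 : (0:ℝ) < z.1 := hz.1
      have h2 : (0:ℝ) < z.2 := hz.2
      have hle : Real.exp (-ε * (z.1 + z.2)) ≤ 1 := by
        rw [Real.exp_le_one_iff]
        have := mul_nonneg hε (by linarith : (0:ℝ) ≤ z.1 + z.2)
        linarith
      have hnn := Real.exp_nonneg (-ε * (z.1 + z.2))
      calc ‖C₀ * m z * Real.exp (-ε * (z.1 + z.2))‖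
          = |C₀ * m z| * Real.exp (-ε * (z.1 + z.2)) := by
            rw [Real.norm_eq_abs, abs_mul, abs_of_nonneg hnn]
        _ ≤ |C₀ * m z| * 1 := by
            exact mul_le_mul_of_nonneg_left hle (abs_nonneg _)
        _ = |C₀ * m z| := mul_one _
  -- Step A : exact rescaling identity for t > 0
  have hstepA : ∀ t : ℝ, 0 < t →
      t ^ (ν₁ + ν₂ + 1) * behrensFisherPDF ν₁ ν₂ g h t
        = M ^ c * ∫ z in Q, C₀ * m z * Real.exp (-(M/(2*t^2)) * (z.1 + z.2)) := by
    intro t ht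
    have hα : (0:ℝ) < t^2/M := by positivity
    have hε : (0:ℝ) < M/(2*t^2) := div_pos hM (by positivity)
    set I2 : ℝ → ℝ → ℝ := fun w₁ w₂ =>
      (Real.sqrt (g * w₁ / ν₁ + h * w₂ / ν₂) / Real.sqrt (2 * Real.pi * (g + h))) *
        Real.exp (-(t ^ 2 / M) * (g * w₁ / ν₁ + h * w₂ / ν₂)) *
        (w₁ ^ (a - 1) * Real.exp (-w₁ / 2) / ((2 : ℝ) ^ a * Real.Gamma a)) *
        (w₂ ^ (b - 1) * Real.exp (-w₂ / 2) / ((2 : ℝ) ^ b * Real.Gamma b)) with hI2_def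
    have hpdf : behrensFisherPDF ν₁ ν₂ g h t
        = ∫ w₁ in Ioi (0:ℝ), ∫ w₂ in Ioi (0:ℝ), I2 w₁ w₂ := rfl
    have s1 : (∫ w₁ in Ioi (0:ℝ), ∫ w₂ in Ioi (0:ℝ), I2 w₁ w₂)
        = (t^2/M)⁻¹ * ∫ u₁ in Ioi (0:ℝ), ∫ w₂ in Ioi (0:ℝ), I2 ((t^2/M)⁻¹ * u₁) w₂ :=
      subst_Ioi (fun w₁ => ∫ w₂ in Ioi (0:ℝ), I2 w₁ w₂) hα
    have s2 : (∫ u₁ in Ioi (0:ℝ), ∫ w₂ in Ioi (0:ℝ), I2 ((t^2/M)⁻¹ * u₁) w₂)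
        = ∫ u₁ in Ioi (0:ℝ), (t^2/M)⁻¹ *
            ∫ u₂ in Ioi (0:ℝ), I2 ((t^2/M)⁻¹ * u₁) ((t^2/M)⁻¹ * u₂) :=
      integral_congr_ae (.of_forall fun u₁ => subst_Ioi (fun w₂ => I2 _ w₂) hα)
    have s4 : (∫ u₁ in Ioi (0:ℝ), ∫ u₂ in Ioi (0:ℝ), I2 ((t^2/M)⁻¹ * u₁) ((t^2/M)⁻¹ * u₂))
        = ∫ u₁ in Ioi (0:ℝ), ∫ u₂ in Ioi (0:ℝ),
            (t^2/M) ^ (2 - c) * (C₀ * m (u₁, u₂) * Real.exp (-(M/(2*t^2)) * (u₁ + u₂))) := by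
      refine setIntegral_congr_fun measurableSet_Ioi fun u₁ hu₁ => ?_
      refine setIntegral_congr_fun measurableSet_Ioi fun u₂ hu₂ => ?_
      exact claim_pointwise g h hg hh ν₁ ν₂ hν₁ hν₂ ht hu₁ hu₂
    have s6 : (∫ u₁ in Ioi (0:ℝ), ∫ u₂ in Ioi (0:ℝ),
          C₀ * m (u₁, u₂) * Real.exp (-(M/(2*t^2)) * (u₁ + u₂)))
        = ∫ z in Q, C₀ * m z * Real.exp (-(M/(2*t^2)) * (z.1 + z.2)) := by
      have hint := hΨ (M/(2*t^2)) hε.le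
      rw [IntegrableOn, Measure.volume_eq_prod] at hint
      rw [hQ_def, Measure.volume_eq_prod]
      exact (setIntegral_prod _ hint).symm
    have hpow : t ^ (ν₁ + ν₂ + 1) * ((t^2/M)⁻¹ * ((t^2/M)⁻¹ * (t^2/M) ^ (2 - c))) = M ^ c := by
      have e0 : (t^2/M)⁻¹ * ((t^2/M)⁻¹ * (t^2/M) ^ (2 - c)) = (t^2/M) ^ (-c) := by
        rw [← Real.rpow_neg_one (t^2/M), ← Real.rpow_add hα, ← Real.rpow_add hα]
        congr 1
        ring
      have e1 : t ^ (ν₁ + ν₂ + 1) = (t^2) ^ c := by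
        have h2c : ((ν₁ + ν₂ + 1 : ℕ) : ℝ) = 2 * c := by
          rw [hc_def]; push_cast; ring
        rw [← Real.rpow_natCast t (ν₁ + ν₂ + 1), h2c, Real.rpow_mul ht.le,
          show (2:ℝ) = ((2:ℕ):ℝ) from by norm_num, Real.rpow_natCast]
      have e2 : (t^2/M) ^ (-c) = (t^2) ^ (-c) * M ^ c := by
        rw [Real.div_rpow (sq_nonneg t) hM.le, Real.rpow_neg hM.le, div_eq_mul_inv, inv_inv]
      rw [e0, e1, e2, ← mul_assoc, ← Real.rpow_add (by positivity : (0:ℝ) < t^2)]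
      simp
    calc t ^ (ν₁ + ν₂ + 1) * behrensFisherPDF ν₁ ν₂ g h t
        = t ^ (ν₁ + ν₂ + 1) * ((t^2/M)⁻¹ * ((t^2/M)⁻¹ * ((t^2/M) ^ (2 - c) *
            ∫ z in Q, C₀ * m z * Real.exp (-(M/(2*t^2)) * (z.1 + z.2))))) := by
          rw [hpdf, s1, s2, integral_const_mul, s4]
          simp_rw [integral_const_mul]
          rw [s6]
      _ = M ^ c * ∫ z in Q, C₀ * m z * Real.exp (-(M/(2*t^2)) * (z.1 + z.2)) := by
          rw [← hpow]; ring
  -- Gamma/Beta values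
  have hval0 : ∫ z in Q, m z
      = κ₁ ^ (-a) * κ₂ ^ (-b) *
        (Real.Gamma c * (Real.Gamma a * Real.Gamma b / Real.Gamma (a + b))) := by
    rw [hm_def, hQ_def, mast_value hκ₁ hκ₂ ha hb hab2,
      show a + b + 1/2 = c from by rw [ha_def, hb_def, hc_def]; ring]
  have hval1 : ∫ z in Q, mast κ₁ κ₂ (a+1) b (1/2) z
      = κ₁ ^ (-(a+1)) * κ₂ ^ (-b) *
        (Real.Gamma (c+1) * (Real.Gamma (a+1) * Real.Gamma b / Real.Gamma (a+1+b))) := by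
    rw [hQ_def, mast_value hκ₁ hκ₂ (by linarith) hb (by linarith),
      show a + 1 + b + 1/2 = c + 1 from by rw [ha_def, hb_def, hc_def]; ring]
  have hval2 : ∫ z in Q, mast κ₁ κ₂ a (b+1) (1/2) z
      = κ₁ ^ (-a) * κ₂ ^ (-(b+1)) *
        (Real.Gamma (c+1) * (Real.Gamma a * Real.Gamma (b+1) / Real.Gamma (a+(b+1)))) := by
    rw [hQ_def, mast_value hκ₁ hκ₂ ha (by linarith) (by linarith),
      show a + (b+1) + 1/2 = c + 1 from by rw [ha_def, hb_def, hc_def]; ring]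
  have ne1 : Real.sqrt (2 * Real.pi * (g + h)) ≠ 0 := by
    have : (0:ℝ) < 2 * Real.pi * (g + h) := by positivity
    positivity
  have ne2 : (2:ℝ) ^ a ≠ 0 := (Real.rpow_pos_of_pos two_pos _).ne'
  have ne3 : (2:ℝ) ^ b ≠ 0 := (Real.rpow_pos_of_pos two_pos _).ne'
  have ne4 : Real.Gamma a ≠ 0 := (Real.Gamma_pos_of_pos ha).ne'
  have ne5 : Real.Gamma b ≠ 0 := (Real.Gamma_pos_of_pos hb).ne'
  have hKC : K = C₀ * (κ₁ ^ (-a) * κ₂ ^ (-b)) * Real.Gamma c := by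
    have e1 : κ₁ ^ (-a) = ((ν₁:ℝ)/g) ^ a := by
      rw [Real.rpow_neg hκ₁.le, ← Real.inv_rpow hκ₁.le, hκ₁_def, inv_div]
    have e2 : κ₂ ^ (-b) = ((ν₂:ℝ)/h) ^ b := by
      rw [Real.rpow_neg hκ₂.le, ← Real.inv_rpow hκ₂.le, hκ₂_def, inv_div]
    rw [hK, e1, e2, hC₀_def, Real.rpow_add two_pos a b]
    field_simp
  have hL0' : L₀ = M ^ c * ∫ z in Q, C₀ * m z := by
    rw [integral_const_mul, hval0, hL₀, hKC]
    simp only [realBeta]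
    ring
  -- dominated convergence
  have hDint : IntegrableOn (fun z : ℝ × ℝ => C₀ * m z * ((M/2) * (z.1 + z.2))) Q := by
    refine IntegrableOn.congr_fun ((hB1.add hB2).const_mul (C₀ * (M/2))) (fun z hz => ?_) hQm
    simp only [Pi.add_apply]
    rw [← hsplit z hz]
    ring
  have hDCT : Tendsto (fun t : ℝ => ∫ z in Q,
        C₀ * m z * (t^2 * (Real.exp (-(M/(2*t^2)) * (z.1 + z.2)) - 1)))
      atTop (𝓝 (∫ z in Q, C₀ * m z * (-(M/2) * (z.1 + z.2)))) := by
    refine tendsto_integral_filter_of_dominated_convergence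
      (fun z => |C₀ * m z * ((M/2) * (z.1 + z.2))|) ?_ ?_ hDint.abs ?_
    · filter_upwards with t
      exact ((hm_meas.const_mul C₀).mul (by fun_prop)).aestronglyMeasurable
    · filter_upwards [eventually_gt_atTop (0:ℝ)] with t ht
      filter_upwards [ae_restrict_mem hQm] with z hz
      have h1 : (0:ℝ) < z.1 := hz.1
      have h2 : (0:ℝ) < z.2 := hz.2
      have hx : (0:ℝ) ≤ M/(2*t^2) * (z.1 + z.2) :=
        mul_nonneg (div_nonneg hM.le (by positivity)) (by linarith)
      have hhe : |Real.exp (-(M/(2*t^2)) * (z.1 + z.2)) - 1| ≤ M/(2*t^2) * (z.1 + z.2) := by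
        have e1 : Real.exp (-(M/(2*t^2)) * (z.1 + z.2)) ≤ 1 := by
          rw [Real.exp_le_one_iff]; linarith
        have e2 := Real.add_one_le_exp (-(M/(2*t^2)) * (z.1 + z.2))
        rw [abs_le]
        constructor <;> linarith
      have hfin : t^2 * (M/(2*t^2) * (z.1 + z.2)) = (M/2) * (z.1 + z.2) := by
        have h2t : (t:ℝ)^2 ≠ 0 := by positivity
        field_simp
        try ring
      calc ‖C₀ * m z * (t^2 * (Real.exp (-(M/(2*t^2)) * (z.1 + z.2)) - 1))‖
          = |C₀ * m z| * (t^2 * |Real.exp (-(M/(2*t^2)) * (z.1 + z.2)) - 1|) := by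
            rw [Real.norm_eq_abs, abs_mul, abs_mul (t^2), abs_of_nonneg (sq_nonneg t)]
        _ ≤ |C₀ * m z| * (t^2 * (M/(2*t^2) * (z.1 + z.2))) := by gcongr
        _ = |C₀ * m z| * ((M/2) * (z.1 + z.2)) := by rw [hfin]
        _ = |C₀ * m z * ((M/2) * (z.1 + z.2))| := by
            rw [abs_mul (C₀ * m z), abs_of_nonneg (by positivity : (0:ℝ) ≤ (M/2) * (z.1 + z.2))]
    · filter_upwards [ae_restrict_mem hQm] with z hz
      have h1 : (0:ℝ) < z.1 := hz.1
      have h2 : (0:ℝ) < z.2 := hz.2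
      exact (scalar_limit (S := z.1 + z.2) hM).const_mul (C₀ * m z)
  -- final value identification
  have hVeq : -K * c * M ^ (c+1) *
        (((ν₁:ℝ)/(2*g)) * realBeta (a+1) b + ((ν₂:ℝ)/(2*h)) * realBeta a (b+1))
      = M ^ c * ∫ z in Q, C₀ * m z * (-(M/2) * (z.1 + z.2)) := by
    have hre : (∫ z in Q, C₀ * m z * (-(M/2) * (z.1 + z.2)))
        = (-(C₀ * (M/2))) * ((∫ z in Q, mast κ₁ κ₂ (a+1) b (1/2) z)
            + ∫ z in Q, mast κ₁ κ₂ a (b+1) (1/2) z) := by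
      rw [← integral_add hB1 hB2, ← integral_const_mul]
      refine setIntegral_congr_fun hQm fun z hz => ?_
      rw [← hsplit z hz]
      ring
    have f1 : κ₁ ^ (-(a+1)) = κ₁ ^ (-a) * ((ν₁:ℝ)/g) := by
      rw [show -(a+1) = -a + (-1) from by ring, Real.rpow_add hκ₁, Real.rpow_neg_one,
        hκ₁_def, inv_div]
    have f2 : κ₂ ^ (-(b+1)) = κ₂ ^ (-b) * ((ν₂:ℝ)/h) := by
      rw [show -(b+1) = -b + (-1) from by ring, Real.rpow_add hκ₂, Real.rpow_neg_one,
        hκ₂_def, inv_div]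
    have f3 : M ^ (c+1) = M ^ c * M := Real.rpow_add_one hM.ne' c
    have f4 : Real.Gamma (c+1) = c * Real.Gamma c := Real.Gamma_add_one hc.ne'
    rw [hre, hval1, hval2, hKC, f1, f2, f3, f4]
    simp only [realBeta]
    ring
  rw [show -K * c * M ^ (c+1) *
        (((ν₁:ℝ)/(2*g)) * realBeta (a+1) b + ((ν₂:ℝ)/(2*h)) * realBeta a (b+1))
      = M ^ c * ∫ z in Q, C₀ * m z * (-(M/2) * (z.1 + z.2)) from hVeq]
  refine Tendsto.congr' ?_ (hDCT.const_mul (M ^ c))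
  filter_upwards [eventually_gt_atTop (0:ℝ)] with t ht
  refine Eq.symm ?_
  have hε : (0:ℝ) ≤ M/(2*t^2) := div_nonneg hM.le (by positivity)
  have hsub : (∫ z in Q, C₀ * m z * Real.exp (-(M/(2*t^2)) * (z.1 + z.2)))
      - (∫ z in Q, C₀ * m z)
      = ∫ z in Q, C₀ * m z * (Real.exp (-(M/(2*t^2)) * (z.1 + z.2)) - 1) := by
    rw [← integral_sub (hΨ (M/(2*t^2)) hε) (hB.const_mul C₀)]
    exact setIntegral_congr_fun hQm fun z hz => by ring
  calc t ^ 2 * (t ^ (ν₁ + ν₂ + 1) * behrensFisherPDF ν₁ ν₂ g h t - L₀)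
      = M ^ c * (t^2 * ((∫ z in Q, C₀ * m z * Real.exp (-(M/(2*t^2)) * (z.1 + z.2)))
          - ∫ z in Q, C₀ * m z)) := by
        rw [hstepA t ht, hL0']
        ring
    _ = M ^ c * ∫ z in Q, C₀ * m z * (t^2 * (Real.exp (-(M/(2*t^2)) * (z.1 + z.2)) - 1)) := by
        rw [hsub, ← integral_const_mul]
        congr 1
        exact setIntegral_congr_fun hQm fun z hz => by ring
end

section
/- Let g, h, ν₁, ν₂ be positive real numbers and define the Welch–Satterthwaite effective degrees of freedom ν_W = (g + h)² / (g²/ν₁ + h²/ν₂). Then min(ν₁, ν₂) ≤ ν_W ≤ ν₁ + ν₂, and the upper bound is attained (ν_W = ν₁ + ν₂) if and only if g·ν₂ = h·ν₁. -/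
/-- **Bounds on Welch–Satterthwaite effective degrees of freedom.**
For positive reals `g, h, ν₁, ν₂` and `ν_W = (g+h)²/(g²/ν₁ + h²/ν₂)`,
`min(ν₁, ν₂) ≤ ν_W ≤ ν₁ + ν₂`, with `ν_W = ν₁ + ν₂` iff `g·ν₂ = h·ν₁`. -/
theorem welch_satterthwaite_bounds
    (g h ν₁ ν₂ : ℝ) (hg : 0 < g) (hh : 0 < h) (hν₁ : 0 < ν₁) (hν₂ : 0 < ν₂) :
    min ν₁ ν₂ ≤ (g + h) ^ 2 / (g ^ 2 / ν₁ + h ^ 2 / ν₂) ∧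
    (g + h) ^ 2 / (g ^ 2 / ν₁ + h ^ 2 / ν₂) ≤ ν₁ + ν₂ ∧
    ((g + h) ^ 2 / (g ^ 2 / ν₁ + h ^ 2 / ν₂) = ν₁ + ν₂ ↔ g * ν₂ = h * ν₁) := by
  have hD : 0 < g ^ 2 / ν₁ + h ^ 2 / ν₂ := by positivity
  refine ⟨?_, ?_, ?_⟩
  · rw [le_div_iff₀ hD]
    have hm₁ : min ν₁ ν₂ ≤ ν₁ := min_le_left _ _
    have hm₂ : min ν₁ ν₂ ≤ ν₂ := min_le_right _ _
    have h1 : min ν₁ ν₂ * (g ^ 2 / ν₁) ≤ g ^ 2 := by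
      calc min ν₁ ν₂ * (g ^ 2 / ν₁) ≤ ν₁ * (g ^ 2 / ν₁) := by
            apply mul_le_mul_of_nonneg_right hm₁; positivity
        _ = g ^ 2 := by field_simp
    have h2 : min ν₁ ν₂ * (h ^ 2 / ν₂) ≤ h ^ 2 := by
      calc min ν₁ ν₂ * (h ^ 2 / ν₂) ≤ ν₂ * (h ^ 2 / ν₂) := by
            apply mul_le_mul_of_nonneg_right hm₂; positivity
        _ = h ^ 2 := by field_simp
    nlinarith [mul_pos hg hh]
  · rw [div_le_iff₀ hD, div_add_div _ _ (ne_of_gt hν₁) (ne_of_gt hν₂),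
      ← mul_div_assoc, le_div_iff₀ (by positivity : (0:ℝ) < ν₁ * ν₂)]
    nlinarith [sq_nonneg (g * ν₂ - h * ν₁)]
  · rw [div_eq_iff (ne_of_gt hD)]
    constructor
    · intro hE
      have : (g * ν₂ - h * ν₁) ^ 2 = 0 := by
        have hE' : (g + h) ^ 2 * (ν₁ * ν₂) =
            (ν₁ + ν₂) * (g ^ 2 * ν₂ + h ^ 2 * ν₁) := by
          field_simp at hE
          nlinarith [hE]
        nlinarith [hE']
      have := pow_eq_zero_iff (n := 2) (by norm_num) |>.mp this
      linarith
    · intro hE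
      field_simp
      nlinarith [hE]
end
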